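/- arXiv:1306.0758 — 7 statements merged into one kernel-verified Lean document; each statement's English description precedes it below -/
import Mathlib

section
/- Let k and n be integers with n ≥ k+2 ≥ 4. Suppose there exists a prime p > k with p dividing n−l for some l with 1 ≤ l ≤ k−1, and let e = ord_p(n−l) be the exact power of p dividing n−l; assume gcd(e, l) ≤ 2 and gcd(e, k−l) ≤ 2. If l_1 is a positive integer with l_1 < k/2 such that l ∉ {l_1, 2l_1, k−l_1, k−2l_1}, then F_{n,k}(x) has no factor of degree l_1 over ℚ. -/
/-!
Away from `l`, the coefficients of `F` all have `p`-adic valuation `e = ord_p (n - l)`, while the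
`l`-th is a unit: the Newton polygon of `F` is a valley with edges of slopes `-e/l` and `e/(k-l)`.
Instead of Newton polygons we use their Legendre transform `μ ↦ min_j (v_p(F_j) + μ j)`, the
logarithm of a `p`-adic Gauss norm, which is additive on products. For a factorization `F = g q`
it is affine in `μ` between the two slopes, which pins down an index `m` of `g` lying on the
supporting lines of both slopes; this gives `l ∣ e m` and `(k - l) ∣ e (deg g - m)`. Since
`gcd(e, l), gcd(e, k - l) ≤ 2`, `2 deg g` is the sum of an element of `{0, l, 2l}` and one of
`{0, k - l, 2(k - l)}`, and the excluded values of `l` leave no such sum equal to `2 l₁ < k`.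
-/

open Polynomial

/-- `c n k j = (−1)^{k−j} C(n,j) C(n−j−1, k−j)`, the `j`-th coefficient of `P_{n,k}(x−1)`. -/
def c (n k j : ℕ) : ℤ :=
  (-1) ^ (k - j) * (n.choose j : ℤ) * ((n - j - 1).choose (k - j) : ℤ)

/-- `F n k a = ∑_{j=0}^{k} a_j c_j x^j` as a polynomial over `ℚ`. -/
noncomputable def F (n k : ℕ) (a : ℕ → ℤ) : Polynomial ℚ :=
  ∑ j ∈ Finset.range (k + 1), Polynomial.C ((a j * c n k j : ℤ) : ℚ) * Polynomial.X ^ j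

open scoped Nat

section PadicWeight

variable (p : ℕ)

noncomputable def padicWeight (μ : ℝ) (P : ℚ[X]) (j : ℕ) : ℝ :=
  padicValRat p (P.coeff j) + μ * j

variable [Fact p.Prime]

/-- The minimum of `padicWeight p μ P j` over the support of `P`, read off the Gauss norm of `P`
at radius `p ^ (-μ)`. -/
noncomputable def padicMinWeight (μ : ℝ) (P : ℚ[X]) : ℝ :=
  -Real.logb p (P.gaussNorm (Rat.AbsoluteValue.padic p) ((p : ℝ) ^ (-μ)))

variable {p} {μ : ℝ} {P Q : ℚ[X]}

lemma Rat.AbsoluteValue.isNonarchimedean_padic : IsNonarchimedean (Rat.AbsoluteValue.padic p) :=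
  fun x y => by simpa using (Rat.cast_le (K := ℝ)).2 (padicNorm.nonarchimedean (q := x) (r := y))

lemma padic_coeff_mul_rpow_pow {j : ℕ} (hj : P.coeff j ≠ 0) :
    Rat.AbsoluteValue.padic p (P.coeff j) * ((p : ℝ) ^ (-μ)) ^ j
      = (p : ℝ) ^ (-padicWeight p μ P j) := by
  have hp : (0 : ℝ) < p := mod_cast (Fact.out : p.Prime).pos
  rw [Rat.AbsoluteValue.padic_eq_padicNorm, padicNorm.eq_zpow_of_nonzero hj, ← Real.rpow_natCast,
    ← Real.rpow_mul hp.le, Rat.cast_zpow, Rat.cast_natCast, ← Real.rpow_intCast,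
    ← Real.rpow_add hp, padicWeight]
  push_cast
  ring_nf

lemma gaussNorm_padic_pos (hP : P ≠ 0) :
    0 < P.gaussNorm (Rat.AbsoluteValue.padic p) ((p : ℝ) ^ (-μ)) := by
  have hp : (0 : ℝ) < p := mod_cast (Fact.out : p.Prime).pos
  refine (P.gaussNorm_nonneg _ (by positivity)).lt_of_ne' ?_
  rwa [Ne, gaussNorm_eq_zero_iff _ _ (fun x hx => (AbsoluteValue.eq_zero _).1 hx) (by positivity)]

lemma padicMinWeight_le_padicWeight {j : ℕ} (hj : P.coeff j ≠ 0) :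
    padicMinWeight p μ P ≤ padicWeight p μ P j := by
  have hp : (1 : ℝ) < p := mod_cast (Fact.out : p.Prime).one_lt
  have hterm :=
    P.le_gaussNorm (Rat.AbsoluteValue.padic p) (c := (p : ℝ) ^ (-μ)) (by positivity) j
  rw [padic_coeff_mul_rpow_pow hj] at hterm
  have hlog := Real.logb_le_logb_of_le hp (by positivity) hterm
  rw [Real.logb_rpow (by positivity) hp.ne'] at hlog
  rw [padicMinWeight]
  linarith

lemma exists_padicWeight_eq_padicMinWeight (hP : P ≠ 0) :
    ∃ j, P.coeff j ≠ 0 ∧ padicWeight p μ P j = padicMinWeight p μ P := by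
  have hp : (1 : ℝ) < p := mod_cast (Fact.out : p.Prime).one_lt
  obtain ⟨j, hj⟩ := P.exists_eq_gaussNorm (Rat.AbsoluteValue.padic p) ((p : ℝ) ^ (-μ))
  have hcoeff : P.coeff j ≠ 0 := fun h0 => by
    simpa [hj, h0] using gaussNorm_padic_pos (p := p) (μ := μ) hP
  refine ⟨j, hcoeff, ?_⟩
  rw [padicMinWeight, hj, padic_coeff_mul_rpow_pow hcoeff, Real.logb_rpow (by positivity) hp.ne',
    neg_neg]

lemma padicMinWeight_mul (hP : P ≠ 0) (hQ : Q ≠ 0) :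
    padicMinWeight p μ (P * Q) = padicMinWeight p μ P + padicMinWeight p μ Q := by
  have hp : (0 : ℝ) < p := mod_cast (Fact.out : p.Prime).pos
  rw [padicMinWeight, gaussNorm_mul Rat.AbsoluteValue.isNonarchimedean_padic (by positivity),
    Real.logb_mul (gaussNorm_padic_pos hP).ne' (gaussNorm_padic_pos hQ).ne', padicMinWeight,
    padicMinWeight]
  ring

lemma padicWeight_eq_padicMinWeight_of_add_le (hP : P ≠ 0) (hQ : Q ≠ 0) {i j : ℕ}
    (hi : P.coeff i ≠ 0) (hj : Q.coeff j ≠ 0)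
    (h : padicWeight p μ P i + padicWeight p μ Q j ≤ padicMinWeight p μ (P * Q)) :
    padicWeight p μ P i = padicMinWeight p μ P := by
  have hPi := padicMinWeight_le_padicWeight (p := p) (μ := μ) hi
  have hQj := padicMinWeight_le_padicWeight (p := p) (μ := μ) hj
  rw [padicMinWeight_mul hP hQ] at h
  linarith

lemma padicWeight_eq_padicMinWeight_of_coeff_mul {i j : ℕ}
    (hij : (P * Q).coeff (i + j) = P.coeff i * Q.coeff j) (hne : (P * Q).coeff (i + j) ≠ 0)
    (hmin : padicWeight p μ (P * Q) (i + j) ≤ padicMinWeight p μ (P * Q)) :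
    padicWeight p μ P i = padicMinWeight p μ P := by
  rw [hij] at hne
  have hi := left_ne_zero_of_mul hne
  have hj := right_ne_zero_of_mul hne
  refine padicWeight_eq_padicMinWeight_of_add_le (fun h => hi (by simp [h]))
    (fun h => hj (by simp [h])) hi hj ?_
  simp only [padicWeight, hij, padicValRat.mul hi hj] at hmin ⊢
  push_cast at hmin
  linarith

lemma exists_padicWeight_eq_padicMinWeight_of_affine (hP : P ≠ 0) (hQ : Q ≠ 0)
    {α β w : ℝ} {l : ℕ} (hαβ : α < β)
    (hPQ : ∀ μ ∈ Set.Icc α β, padicMinWeight p μ (P * Q) = w + μ * l) :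
    ∃ i j, i + j = l ∧ P.coeff i ≠ 0 ∧ Q.coeff j ≠ 0 ∧
      ∀ μ ∈ Set.Icc α β, padicWeight p μ P i = padicMinWeight p μ P := by
  -- Minimizing indices at the midpoint have weights affine in `μ`, bounding `w + μ l` from above
  -- on `[α, β]` and touching it in the interior: they minimize on the whole interval.
  set μ₀ := (α + β) / 2 with hμ₀_def
  obtain ⟨i, hi, hPi⟩ := exists_padicWeight_eq_padicMinWeight (p := p) (μ := μ₀) hP
  obtain ⟨j, hj, hQj⟩ := exists_padicWeight_eq_padicMinWeight (p := p) (μ := μ₀) hQ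
  have hbound :
      ∀ μ ∈ Set.Icc α β, w + μ * l ≤ padicWeight p μ P i + padicWeight p μ Q j := by
    intro μ hμ
    rw [← hPQ μ hμ, padicMinWeight_mul hP hQ]
    exact add_le_add (padicMinWeight_le_padicWeight hi) (padicMinWeight_le_padicWeight hj)
  have hμ₀ : padicWeight p μ₀ P i + padicWeight p μ₀ Q j = w + μ₀ * l := by
    rw [hPi, hQj, ← padicMinWeight_mul hP hQ, hPQ μ₀ ⟨by linarith, by linarith⟩]
  have hα := hbound α ⟨le_rfl, hαβ.le⟩
  have hβ := hbound β ⟨hαβ.le, le_rfl⟩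
  simp only [padicWeight] at hα hβ hμ₀
  have hij : (i + j : ℝ) = l := by
    have h₁ : 0 ≤ (β - μ₀) * ((i + j : ℝ) - l) := by linarith
    have h₂ : 0 ≤ (μ₀ - α) * (l - (i + j : ℝ)) := by linarith
    linarith [nonneg_of_mul_nonneg_right h₁ (by linarith),
      nonneg_of_mul_nonneg_right h₂ (by linarith)]
  refine ⟨i, j, by exact_mod_cast hij, hi, hj, fun μ hμ => ?_⟩
  refine padicWeight_eq_padicMinWeight_of_add_le hP hQ hi hj ?_
  rw [hPQ μ hμ]
  simp only [padicWeight]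
  linear_combination hμ₀ + (μ - μ₀) * hij

end PadicWeight

section Valley

/-- The Newton polygon of such a `P` is the valley with edges `(0, e)–(l, 0)` and
`(l, 0)–(P.natDegree, e)`. -/
def HasValleyAt (p l e : ℕ) (P : ℚ[X]) : Prop :=
  ∀ j ≤ P.natDegree,
    P.coeff j ≠ 0 ∧ padicValRat p (P.coeff j) = if j = l then 0 else (e : ℤ)

lemma mul_le_add_mul_of_mem_Icc {μ e l k j : ℝ} (hj : j ∈ Set.Icc 0 k)
    (hμl : μ * l ≤ e) (hμk : -(μ * (k - l)) ≤ e) : μ * l ≤ e + μ * j := by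
  rcases le_total 0 μ with hμ | hμ
  · nlinarith [mul_nonneg hμ hj.1]
  · nlinarith [mul_le_mul_of_nonneg_left hj.2 (neg_nonneg.2 hμ)]

lemma dvd_mul_of_mul_eq_intCast {r e x : ℕ} {μ : ℝ} {u : ℤ} (hμ : μ * r = e)
    (h : μ * x = u) :
    r ∣ e * x := by
  have hreal : ((e * x : ℕ) : ℝ) = r * u := by
    push_cast
    rw [← hμ, ← h]
    ring
  exact Int.natCast_dvd_natCast.1 ⟨u, by exact_mod_cast hreal⟩

variable {p l e : ℕ} {P g q : ℚ[X]}

lemma HasValleyAt.padicWeight_eq (hv : HasValleyAt p l e P) {j : ℕ} (hj : j ≤ P.natDegree)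
    (μ : ℝ) : padicWeight p μ P j = (if j = l then 0 else (e : ℝ)) + μ * j := by
  rw [padicWeight, (hv j hj).2]
  split_ifs <;> simp

variable [Fact p.Prime]

lemma HasValleyAt.padicMinWeight_eq (hv : HasValleyAt p l e P) (hlk : l ≤ P.natDegree)
    {μ : ℝ} (hμl : μ * l ≤ e) (hμk : -(μ * (P.natDegree - l)) ≤ e) :
    padicMinWeight p μ P = μ * l := by
  have hPl := hv l hlk
  have hP : P ≠ 0 := fun h => hPl.1 (by simp [h])
  obtain ⟨j, hj, hPj⟩ := exists_padicWeight_eq_padicMinWeight (p := p) (μ := μ) hP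
  have hjk : j ≤ P.natDegree := le_natDegree_of_ne_zero hj
  refine le_antisymm ?_ ?_
  · simpa [hv.padicWeight_eq hlk] using padicMinWeight_le_padicWeight (p := p) (μ := μ) hPl.1
  · rw [← hPj, hv.padicWeight_eq hjk]
    split_ifs with hjl
    · simp [hjl]
    · exact mul_le_add_mul_of_mem_Icc ⟨by positivity, by exact_mod_cast hjk⟩ hμl hμk

theorem HasValleyAt.exists_common_vertex (hv : HasValleyAt p l e P) (hl : 0 < l)
    (hlk : l < P.natDegree) (he : 0 < e) (hP : P = g * q) :
    ∃ m ≤ l, m ≤ g.natDegree ∧ g.natDegree - m ≤ P.natDegree - l ∧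
      padicWeight p (e / l) g 0 = padicWeight p (e / l) g m ∧
      padicWeight p (-(e / (P.natDegree - l))) g g.natDegree
        = padicWeight p (-(e / (P.natDegree - l))) g m := by
  set k := P.natDegree with hk
  have hP0 : P ≠ 0 := fun h => (hv l hlk.le).1 (by simp [h])
  have hg : g ≠ 0 := fun h => hP0 (by simp [hP, h])
  have hq : q ≠ 0 := fun h => hP0 (by simp [hP, h])
  have hdeg : g.natDegree + q.natDegree = k := by rw [hk, hP, natDegree_mul hg hq]
  have hl' : (0 : ℝ) < l := by exact_mod_cast hl
  have hkl : (0 : ℝ) < k - l := sub_pos.2 (by exact_mod_cast hlk)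
  have he' : (0 : ℝ) < e := by exact_mod_cast he
  set β : ℝ := e / l
  set α : ℝ := -(e / (k - l)) with hα
  have hβl : β * l = e := div_mul_cancel₀ _ hl'.ne'
  have hαkl : α * (k - l) = -e := by rw [hα, neg_mul, div_mul_cancel₀ _ hkl.ne']
  have hαβ : α < β := by linarith [div_pos he' hl', div_pos he' hkl]
  have hW : ∀ μ ∈ Set.Icc α β, padicMinWeight p μ (g * q) = 0 + μ * l := by
    rintro μ ⟨hαμ, hμβ⟩
    rw [zero_add, ← hP]
    exact hv.padicMinWeight_eq hlk.le (by nlinarith) (by nlinarith)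
  obtain ⟨m, m', hmm', hgm, hqm', hm⟩ :=
    exists_padicWeight_eq_padicMinWeight_of_affine hg hq hαβ hW
  have hmd : m ≤ g.natDegree := le_natDegree_of_ne_zero hgm
  have hm'd : m' ≤ q.natDegree := le_natDegree_of_ne_zero hqm'
  refine ⟨m, by omega, hmd, by omega, ?_, ?_⟩
  -- The constant and leading coefficients of `P` are single products of coefficients of `g`, `q`.
  · rw [hm β ⟨hαβ.le, le_rfl⟩]
    refine padicWeight_eq_padicMinWeight_of_coeff_mul (Q := q) (j := 0) (mul_coeff_zero g q) ?_ ?_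
    · rw [← hP]
      exact (hv 0 (by omega)).1
    · rw [hW β ⟨hαβ.le, le_rfl⟩, ← hP, add_zero, hv.padicWeight_eq (by omega),
        if_neg (by omega)]
      push_cast
      linarith
  · rw [hm α ⟨le_rfl, hαβ.le⟩]
    refine padicWeight_eq_padicMinWeight_of_coeff_mul (coeff_mul_degree_add_degree g q) ?_ ?_
    · rw [← hP, hdeg]
      exact (hv k le_rfl).1
    · rw [hW α ⟨le_rfl, hαβ.le⟩, ← hP, hdeg, hv.padicWeight_eq le_rfl, if_neg (by omega)]
      linarith

theorem HasValleyAt.exists_natDegree_split (hv : HasValleyAt p l e P) (hl : 0 < l)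
    (hlk : l < P.natDegree) (he : 0 < e) (hP : P = g * q) :
    ∃ m ≤ l, m ≤ g.natDegree ∧ g.natDegree - m ≤ P.natDegree - l ∧
      l ∣ e * m ∧ P.natDegree - l ∣ e * (g.natDegree - m) := by
  obtain ⟨m, hml, hmd, hdm, hβ, hα⟩ := hv.exists_common_vertex hl hlk he hP
  have hl' : (l : ℝ) ≠ 0 := by positivity
  have hkl : ((P.natDegree - l : ℕ) : ℝ) = P.natDegree - l := Nat.cast_sub hlk.le
  have hkl' : (P.natDegree : ℝ) - l ≠ 0 := sub_ne_zero.2 (by exact_mod_cast hlk.ne')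
  simp only [padicWeight] at hβ hα
  refine ⟨m, hml, hmd, hdm, dvd_mul_of_mul_eq_intCast (μ := e / l) (div_mul_cancel₀ _ hl')
    (u := padicValRat p (g.coeff 0) - padicValRat p (g.coeff m)) ?_,
    dvd_mul_of_mul_eq_intCast (μ := e / (P.natDegree - l)) (by rw [hkl, div_mul_cancel₀ _ hkl'])
    (u := padicValRat p (g.coeff g.natDegree) - padicValRat p (g.coeff m)) ?_⟩
  · push_cast
    linarith
  · rw [Nat.cast_sub hmd]
    push_cast
    linarith

end Valley

section Valuations

variable {p n k l : ℕ}

lemma padicValNat_sub_eq_zero (hpl : p ∣ n - l) (hl : l < p) (hln : l < n) {i : ℕ} (hi : i < p)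
    (hin : i < n) (hil : i ≠ l) : padicValNat p (n - i) = 0 := by
  refine padicValNat.eq_zero_of_not_dvd fun hpi => hil ?_
  have hdvd : (p : ℤ) ∣ (i : ℤ) - l := by
    have h := Int.natCast_dvd_natCast.2 hpl
    have h' := Int.natCast_dvd_natCast.2 hpi
    rw [Nat.cast_sub hln.le] at h
    rw [Nat.cast_sub hin.le] at h'
    simpa using dvd_sub h h'
  have := Int.eq_zero_of_abs_lt_dvd hdvd (by rw [abs_lt]; omega)
  omega

variable [Fact p.Prime]

lemma padicValNat_descFactorial (hpl : p ∣ n - l) (hl : l < p) (hln : l < n) {m : ℕ}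
    (hmp : m ≤ p) (hmn : m ≤ n) :
    padicValNat p (n.descFactorial m) = if l < m then padicValNat p (n - l) else 0 := by
  induction m with
  | zero => simp
  | succ m ih =>
    rw [Nat.descFactorial_succ, padicValNat.mul (by omega) (Nat.descFactorial_pos.2 (by omega)).ne',
      ih (by omega) (by omega)]
    rcases eq_or_ne m l with rfl | hml
    · simp
    · rw [padicValNat_sub_eq_zero hpl hl hln (by omega) (by omega) hml]
      split_ifs <;> omega

lemma choose_mul_choose_mul_eq_descFactorial {j : ℕ} (hj : j ≤ k) :
    n.choose j * (n - j - 1).choose (k - j) * (j ! * (k - j)! * (n - j))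
      = n.descFactorial (k + 1) := by
  rw [← Nat.descFactorial_mul_descFactorial (k := j + 1) (by omega), Nat.descFactorial_succ,
    Nat.descFactorial_eq_factorial_mul_choose, Nat.descFactorial_eq_factorial_mul_choose,
    show n - (j + 1) = n - j - 1 by omega, show k + 1 - (j + 1) = k - j by omega]
  ring

lemma padicValNat_choose_mul_choose (hkp : k < p) (hkn : k < n) (hlk : l ≤ k) (hpl : p ∣ n - l)
    {j : ℕ} (hj : j ≤ k) :
    padicValNat p (n.choose j * (n - j - 1).choose (k - j))
      = if j = l then 0 else padicValNat p (n - l) := by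
  have hfact : ∀ i ≤ k, padicValNat p i ! = 0 := fun i hi =>
    padicValNat.eq_zero_of_not_dvd fun h => by
      have := (Nat.Prime.dvd_factorial Fact.out).1 h
      omega
  have hB : padicValNat p (j ! * (k - j)! * (n - j)) = padicValNat p (n - j) := by
    rw [padicValNat.mul (by positivity) (by omega), padicValNat.mul (by positivity) (by positivity),
      hfact j hj, hfact (k - j) (by omega), zero_add, zero_add]
  have key := congrArg (padicValNat p) (choose_mul_choose_mul_eq_descFactorial (n := n) hj)
  rw [padicValNat.mul (Nat.mul_ne_zero (Nat.choose_pos (by omega)).ne'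
      (Nat.choose_pos (by omega)).ne') (Nat.mul_ne_zero (by positivity) (by omega)), hB,
    padicValNat_descFactorial hpl (by omega) (by omega) (by omega) (by omega), if_pos (by omega)]
    at key
  rcases eq_or_ne j l with rfl | hjl
  · rw [if_pos rfl]
    omega
  · rw [padicValNat_sub_eq_zero hpl (by omega) (by omega) (by omega) (by omega) hjl] at key
    rw [if_neg hjl]
    omega

end Valuations

section F

variable {p n k l : ℕ} {a : ℕ → ℤ}

lemma coeff_F (j : ℕ) :
    (F n k a).coeff j = if j ≤ k then ((a j * c n k j : ℤ) : ℚ) else 0 := by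
  simp only [F, finsetSum_coeff, coeff_C_mul, coeff_X_pow, mul_ite, mul_one, mul_zero,
    Finset.sum_ite_eq, Finset.mem_range, Nat.lt_succ_iff]

lemma c_ne_zero (hkn : k < n) {j : ℕ} (hj : j ≤ k) : c n k j ≠ 0 := by
  have h₁ := Nat.choose_pos (n := n) (k := j) (by omega)
  have h₂ := Nat.choose_pos (n := n - j - 1) (k := k - j) (by omega)
  unfold c
  positivity

lemma natDegree_F (hkn : k < n) (ha : a k ≠ 0) : (F n k a).natDegree = k := by
  refine natDegree_eq_of_le_of_coeff_ne_zero ?_ ?_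
  · exact natDegree_le_iff_coeff_eq_zero.2 fun j hj => by
      rw [coeff_F, if_neg (by exact_mod_cast hj.not_ge)]
  · rw [coeff_F, if_pos le_rfl]
    exact_mod_cast mul_ne_zero ha (c_ne_zero hkn le_rfl)

lemma padicValInt_c {j : ℕ} :
    padicValInt p (c n k j) = padicValNat p (n.choose j * (n - j - 1).choose (k - j)) := by
  simp [padicValInt, c, Int.natAbs_mul, Int.natAbs_pow]

variable [Fact p.Prime]

lemma hasValleyAt_F (hkp : k < p) (hkn : k < n) (hlk : l ≤ k) (hpl : p ∣ n - l)
    (ha : ∀ j ≤ k, a j ≠ 0 ∧ ¬ (p : ℤ) ∣ a j) :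
    HasValleyAt p l (padicValNat p (n - l)) (F n k a) := by
  intro j hj
  rw [natDegree_F hkn (ha k le_rfl).1] at hj
  have hc := c_ne_zero hkn hj
  rw [coeff_F, if_pos hj, padicValRat.of_int, padicValInt.mul (ha j hj).1 hc,
    padicValInt.eq_zero_of_not_dvd (ha j hj).2, padicValInt_c,
    padicValNat_choose_mul_choose hkp hkn hlk hpl hj]
  refine ⟨by exact_mod_cast mul_ne_zero (ha j hj).1 hc, ?_⟩
  split_ifs <;> simp

end F

lemma two_mul_eq_of_dvd_mul {e l m : ℕ} (hl : 0 < l) (hg : Nat.gcd e l ≤ 2) (h : l ∣ e * m)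
    (hm : m ≤ l) : 2 * m = 0 ∨ 2 * m = l ∨ 2 * m = 2 * l := by
  have hg2 : Nat.gcd e l ∣ 2 := by
    have := Nat.gcd_pos_of_pos_right e hl
    interval_cases Nat.gcd e l <;> norm_num
  have h2 : l ∣ 2 * m := (Nat.dvd_gcd h (dvd_mul_right l m)).trans
    (by rw [Nat.gcd_mul_right]; exact Nat.mul_dvd_mul_right hg2 m)
  obtain ⟨u, hu⟩ := h2
  have : u ≤ 2 := by nlinarith
  interval_cases u <;> omega

theorem F_no_factor_of_degree_general (n k : ℕ) (hn : n ≥ k + 2)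
    (p : ℕ) (hp : p.Prime) (hpk : k < p)
    (l : ℕ) (hl1 : 1 ≤ l) (hl2 : l ≤ k - 1) (hpl : p ∣ (n - l))
    (e : ℕ) (he : e = padicValNat p (n - l))
    (hd : Nat.gcd e l ≤ 2) (hd' : Nat.gcd e (k - l) ≤ 2)
    (l₁ : ℕ) (hl₁ : 0 < l₁) (hl₁k : 2 * l₁ < k)
    (hnotin : l ∉ ({l₁, 2 * l₁, k - l₁, k - 2 * l₁} : Set ℕ))
    (a : ℕ → ℤ) (ha : ∀ j ≤ k, a j ≠ 0 ∧ ∀ q : ℕ, q.Prime → (q : ℤ) ∣ a j → q ≤ k) :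
    ¬∃ g : Polynomial ℚ, g ∣ F n k a ∧ g.natDegree = l₁ := by
  have := Fact.mk hp
  rintro ⟨g, ⟨q, hFgq⟩, rfl⟩
  have ha' : ∀ j ≤ k, a j ≠ 0 ∧ ¬ (p : ℤ) ∣ a j := fun j hj =>
    ⟨(ha j hj).1, fun h => by have := (ha j hj).2 p hp h; omega⟩
  have hdeg := natDegree_F (n := n) (by omega) (ha' k le_rfl).1
  have he₀ : 0 < e := he ▸ one_le_padicValNat_of_dvd (by omega) hpl
  have hv : HasValleyAt p l e (F n k a) := he ▸ hasValleyAt_F hpk (by omega) (by omega) hpl ha'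
  obtain ⟨m, hml, hmg, hgm, hdvd, hdvd'⟩ := hv.exists_natDegree_split hl1 (by omega) he₀ hFgq
  rw [hdeg] at hgm hdvd'
  have h₁ := two_mul_eq_of_dvd_mul hl1 hd hdvd hml
  have h₂ := two_mul_eq_of_dvd_mul (by omega) hd' hdvd' hgm
  simp only [Set.mem_insert_iff, Set.mem_singleton_iff, not_or] at hnotin
  omega

theorem F_no_factor_of_degree (n k : ℕ) (hk : k + 2 ≥ 4) (hn : n ≥ k + 2)
    (p : ℕ) (hp : p.Prime) (hpk : k < p)
    (l : ℕ) (hl1 : 1 ≤ l) (hl2 : l ≤ k - 1) (hpl : p ∣ (n - l))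
    (e : ℕ) (he : e = padicValNat p (n - l))
    (hd : Nat.gcd e l ≤ 2) (hd' : Nat.gcd e (k - l) ≤ 2)
    (l₁ : ℕ) (hl₁ : 0 < l₁) (hl₁k : 2 * l₁ < k)
    (hnotin : l ∉ ({l₁, 2 * l₁, k - l₁, k - 2 * l₁} : Set ℕ))
    (a : ℕ → ℤ) (ha : ∀ j ≤ k, a j ≠ 0 ∧ ∀ q : ℕ, q.Prime → (q : ℤ) ∣ a j → q ≤ k) :
    ¬∃ g : Polynomial ℚ, g ∣ F n k a ∧ g.natDegree = l₁ :=
  F_no_factor_of_degree_general n k hn p hp hpk l hl1 hl2 hpl e he hd hd' l₁ hl₁ hl₁k hnotin a ha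
end

section
/- Let n, k be positive integers with n ≥ k+2 ≥ 4. Suppose there exists a prime p > k such that p^e exactly divides n−l for some l with 1 ≤ l ≤ k−1 (i.e., e = ord_p(n−l) ≥ 1), and that gcd(e, l) = 1 and gcd(e, k−l) = 1. Then F_{n,k}(x) factors over the p-adic field ℚ_p as (a unit multiple of) a product of two non-associate irreducible polynomials, one of degree l and the other of degree k−l. -/
open Polynomial

/-- `F n k a = ∑_{j=0}^{k} a_j c_j x^j` as a polynomial over the `p`-adic field `ℚ_p`. -/
noncomputable def Fp (p : ℕ) [Fact p.Prime] (n k : ℕ) (a : ℕ → ℤ) : Polynomial ℚ_[p] :=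
  ∑ j ∈ Finset.range (k + 1), Polynomial.C ((a j * c n k j : ℤ) : ℚ_[p]) * Polynomial.X ^ j

/-!
Among `n, n - 1, …, n - k` only `n - l` is divisible by `p`, and `p > k` divides neither
`j! (k - j)!` nor `a_j`. Since `c_j j! (k - j)! = ± ∏_{i ≤ k, i ≠ j} (n - i)`, the coefficient
`a_j c_j` has valuation `0` for `j = l` and `e` otherwise. Hence `F ≡ u X^l (mod p)` with `u` a
unit, and Weierstrass preparation over `ℤ_p` gives `F = P Q` with `P` monic of degree `l` and
`Q(0)` a unit.

The Newton polygon of `F` consists of two segments, of slopes `-e/l` and `e/(k - l)`. Let `c` be the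
radius matching one of the slopes. Then the Gauss norm `|F|_c` is attained at `X^l`, and its
multiplicativity forces `|P|_c` (for the first slope) or `|Q|_c` (for the second) to be attained at
both the constant and the leading term. For such a polynomial `f` of degree `d`, any factor of
degree `m` has the same property, so `c^m` is an integral power of `p`; since `c^d = p^{∓e}` with
`e` prime to `d`, this forces `d ∣ m` (Dumas' criterion).
-/

namespace Polynomial

open IsLocalRing
open scoped PowerSeries

theorem exists_monic_mul_of_isUnit_coeff {A : Type*} [CommRing A] [IsLocalRing A]
    [IsAdicComplete (maximalIdeal A) A] (F : A[X]) {l : ℕ}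
    (hlow : ∀ j < l, F.coeff j ∈ maximalIdeal A) (hl : IsUnit (F.coeff l)) :
    ∃ P Q : A[X], P.Monic ∧ P.natDegree = l ∧ IsUnit (Q.coeff 0) ∧ F = P * Q := by
  have horder : ((F : A⟦X⟧).map (residue A)).order = l := by
    rw [PowerSeries.order_eq_nat]
    simp only [PowerSeries.coeff_map, coeff_coe, ne_eq, residue_eq_zero_iff]
    exact ⟨fun h => (mem_maximalIdeal _).1 h hl, hlow⟩
  obtain ⟨P, h, H⟩ := PowerSeries.exists_isWeierstrassFactorization
    (g := (F : A⟦X⟧)) (fun h0 => by simp [h0] at horder)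
  have hP := H.isDistinguishedAt
  have hord : ((P : A⟦X⟧).map (Ideal.Quotient.mk (maximalIdeal A))).order.toNat = P.natDegree := by
    rw [← hP.coe_natDegree_eq_order_map (P : A⟦X⟧) 1 (by simp) (by simp)]; rfl
  -- Weierstrass division by `P` is unique, so the unit `h` is the polynomial quotient `F /ₘ P`.
  obtain ⟨hq, hr⟩ := hP.isWeierstrassDivisorAt'.eq_of_mul_add_eq_mul_add (q := h) (r := 0)
    (q' := ↑(F /ₘ P)) (r' := F %ₘ P) (by simp)
    (by rw [hord, ← degree_eq_natDegree hP.monic.ne_zero]; exact degree_modByMonic_lt F hP.monic)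
    (by rw [← H.eq_mul, coe_zero, add_zero, ← coe_mul, ← coe_add, add_comm, modByMonic_add_div])
  refine ⟨P, F /ₘ P, hP.monic, ?_, ?_, ?_⟩
  · rw [H.natDegree_eq_toNat_order_map, horder]; rfl
  · simpa [hq] using PowerSeries.isUnit_iff_constantCoeff.1 H.isUnit
  · simpa [← hr] using (modByMonic_add_div F P).symm

variable {R : Type*} [Ring R] {v : AbsoluteValue R ℝ} {c : ℝ}

theorem gaussNorm_le_of_forall {f : R[X]} {B : ℝ} (h : ∀ j, v (f.coeff j) * c ^ j ≤ B) :
    f.gaussNorm v c ≤ B := by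
  obtain ⟨i, hi⟩ := f.exists_eq_gaussNorm v c
  exact hi ▸ h i

theorem gaussNorm_pos (hc : 0 < c) {f : R[X]} (hf : f ≠ 0) : 0 < f.gaussNorm v c :=
  (f.gaussNorm_nonneg v hc.le).lt_of_ne'
    ((gaussNorm_eq_zero_iff v f (fun _ => v.eq_zero.1) hc).not.2 hf)

theorem gaussNorm_eq_coeff_zero_of_mul (hna : IsNonarchimedean v) (hc : 0 < c) {r s : R[X]}
    (hs : s ≠ 0) (h : (r * s).gaussNorm v c = v ((r * s).coeff 0)) :
    r.gaussNorm v c = v (r.coeff 0) := by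
  have hr0 := r.le_gaussNorm v hc.le 0
  have hs0 := s.le_gaussNorm v hc.le 0
  rw [pow_zero, mul_one] at hr0 hs0
  rw [gaussNorm_mul hna hc, mul_coeff_zero, map_mul] at h
  nlinarith [v.nonneg (r.coeff 0), gaussNorm_pos (v := v) hc hs]

theorem gaussNorm_eq_leadingCoeff_of_mul [NoZeroDivisors R] (hna : IsNonarchimedean v)
    (hc : 0 < c) {r s : R[X]} (hr : r ≠ 0) (hs : s ≠ 0)
    (h : (r * s).gaussNorm v c = v (r * s).leadingCoeff * c ^ (r * s).natDegree) :
    r.gaussNorm v c = v r.leadingCoeff * c ^ r.natDegree := by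
  have hr0 := r.le_gaussNorm v hc.le r.natDegree
  have hs0 := s.le_gaussNorm v hc.le s.natDegree
  rw [coeff_natDegree] at hr0 hs0
  rw [gaussNorm_mul hna hc, leadingCoeff_mul, natDegree_mul hr hs, map_mul, pow_add] at h
  have := mul_nonneg (v.nonneg r.leadingCoeff) (pow_nonneg hc.le r.natDegree)
  nlinarith [gaussNorm_pos (v := v) hc hs]

theorem Monic.gaussNorm_eq_of_gaussNorm_mul_le [Nontrivial R] (hna : IsNonarchimedean v)
    (hc : 0 < c) {P Q : R[X]} (hP : P.Monic) (hQ0 : v (Q.coeff 0) = 1)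
    (h : (P * Q).gaussNorm v c ≤ c ^ P.natDegree) :
    P.gaussNorm v c = c ^ P.natDegree ∧ Q.gaussNorm v c = 1 := by
  have hP' := P.le_gaussNorm v hc.le P.natDegree
  have hQ' := Q.le_gaussNorm v hc.le 0
  rw [hP.coeff_natDegree, v.map_one, one_mul] at hP'
  rw [hQ0, pow_zero, mul_one] at hQ'
  rw [gaussNorm_mul hna hc] at h
  have := pow_pos hc P.natDegree
  constructor <;> nlinarith

end Polynomial

namespace Padic

variable {p : ℕ} [hp : Fact p.Prime]

theorem isNonarchimedean_toAbsoluteValue :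
    IsNonarchimedean (NormedField.toAbsoluteValue ℚ_[p]) :=
  Padic.nonarchimedean

theorem exists_monic_mul_of_norm_coeff (F : ℚ_[p][X]) {l : ℕ} (hint : ∀ j, ‖F.coeff j‖ ≤ 1)
    (hlow : ∀ j < l, ‖F.coeff j‖ < 1) (hl : ‖F.coeff l‖ = 1) :
    ∃ P Q : ℚ_[p][X], P.Monic ∧ P.natDegree = l ∧ ‖Q.coeff 0‖ = 1 ∧ F = P * Q := by
  obtain ⟨F, rfl⟩ : ∃ F' : ℤ_[p][X], F'.map PadicInt.Coe.ringHom = F :=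
    (lifts_iff_coeff_lifts F).2 fun j => ⟨⟨_, hint j⟩, rfl⟩
  obtain ⟨P, Q, hP, hdeg, hQ, rfl⟩ := F.exists_monic_mul_of_isUnit_coeff (l := l)
    (fun j hj => PadicInt.mem_nonunits.2 (by simp only [coeff_map] at hlow; exact hlow j hj))
    (PadicInt.isUnit_iff.2 (by simp only [coeff_map] at hl; exact hl))
  exact ⟨P.map _, Q.map _, hP.map _, by rwa [hP.natDegree_map],
    by rw [coeff_map]; exact PadicInt.isUnit_iff.1 hQ, Polynomial.map_mul _⟩

theorem exists_zpow_eq_of_norm_eq_mul {x y : ℚ_[p]} (hx : x ≠ 0) (hy : y ≠ 0) {a : ℝ}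
    (h : ‖x‖ = ‖y‖ * a) : ∃ m : ℤ, a = (p : ℝ) ^ m := by
  have hp0 : (p : ℝ) ≠ 0 := by exact_mod_cast hp.out.ne_zero
  refine ⟨y.valuation - x.valuation, ?_⟩
  rw [← mul_div_cancel_left₀ a (norm_ne_zero_iff.2 hy), ← h, norm_eq_zpow_neg_valuation hx,
    norm_eq_zpow_neg_valuation hy, ← zpow_sub₀ hp0]
  ring_nf

theorem irreducible_of_gaussNorm_eq {f : ℚ_[p][X]} {c : ℝ} {t : ℤ} (hc : 0 < c)
    (hdeg : 0 < f.natDegree) (hct : c ^ f.natDegree = (p : ℝ) ^ t)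
    (hcop : IsCoprime (f.natDegree : ℤ) t)
    (h0 : f.gaussNorm (NormedField.toAbsoluteValue ℚ_[p]) c = ‖f.coeff 0‖)
    (htop : f.gaussNorm (NormedField.toAbsoluteValue ℚ_[p]) c =
      ‖f.leadingCoeff‖ * c ^ f.natDegree) :
    Irreducible f := by
  refine ⟨fun hu => hdeg.ne' (natDegree_eq_zero_of_isUnit hu), fun r s hf => ?_⟩
  subst hf
  have hrs : r * s ≠ 0 := fun h => by simp [h] at hdeg
  have hr : r ≠ 0 := left_ne_zero_of_mul hrs
  have hs : s ≠ 0 := right_ne_zero_of_mul hrs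
  have hr0 := gaussNorm_eq_coeff_zero_of_mul isNonarchimedean_toAbsoluteValue hc hs h0
  have hrtop := gaussNorm_eq_leadingCoeff_of_mul isNonarchimedean_toAbsoluteValue hc hr hs htop
  have hr0' : r.coeff 0 ≠ 0 := by
    intro h
    have := gaussNorm_pos (v := NormedField.toAbsoluteValue ℚ_[p]) hc hr
    rw [hr0, h, map_zero] at this
    exact this.false
  obtain ⟨m, hm⟩ := exists_zpow_eq_of_norm_eq_mul hr0' (leadingCoeff_ne_zero.2 hr)
    (hr0.symm.trans hrtop)
  have hp1 : (1 : ℝ) < p := by exact_mod_cast hp.out.one_lt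
  have hmt : m * (r * s).natDegree = t * r.natDegree := by
    rw [← zpow_right_inj₀ (by positivity) hp1.ne', zpow_mul, zpow_mul, ← hm, ← hct]
    norm_cast
    rw [← pow_mul, ← pow_mul, mul_comm]
  have hdvd : (r * s).natDegree ∣ r.natDegree :=
    Int.natCast_dvd_natCast.1 (hcop.dvd_of_dvd_mul_left ⟨m, by rw [← hmt, mul_comm]⟩)
  rw [natDegree_mul hr hs] at hdvd
  rcases Nat.eq_zero_or_pos s.natDegree with hs' | hs'
  · exact Or.inr (isUnit_iff_degree_eq_zero.2 ((degree_eq_iff_natDegree_eq hs).2 hs'))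
  · refine Or.inl (isUnit_iff_degree_eq_zero.2 ((degree_eq_iff_natDegree_eq hr).2 ?_))
    exact Nat.eq_zero_of_dvd_of_lt hdvd (by omega)

theorem exists_pos_pow_eq_zpow (t : ℤ) {d : ℕ} (hd : d ≠ 0) :
    ∃ c : ℝ, 0 < c ∧ c ^ d = (p : ℝ) ^ t :=
  have hp0 : (0 : ℝ) < p := by exact_mod_cast hp.out.pos
  ⟨((p : ℝ) ^ t) ^ (d⁻¹ : ℝ), by positivity, Real.rpow_inv_natCast_pow (by positivity) hd⟩

section TwoSegments

variable {P Q : ℚ_[p][X]} {k l e : ℕ}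

theorem irreducible_monic_factor (hl : 0 < l) (hel : Nat.Coprime e l)
    (hF : ∀ j, ‖(P * Q).coeff j‖ = if k < j then 0 else if j = l then 1 else (p : ℝ) ^ (-(e : ℤ)))
    (hP : P.Monic) (hPdeg : P.natDegree = l) (hQ0 : ‖Q.coeff 0‖ = 1)
    (hP0 : ‖P.coeff 0‖ = (p : ℝ) ^ (-(e : ℤ))) :
    Irreducible P := by
  obtain ⟨c, hc, hcl⟩ := exists_pos_pow_eq_zpow (p := p) (-e) hl.ne'
  have hc1 : c ≤ 1 := (pow_le_one_iff_of_nonneg hc.le hl.ne').1 (by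
    rw [hcl]; exact zpow_le_one_of_nonpos₀ (by exact_mod_cast hp.out.one_lt.le) (by omega))
  have hG : (P * Q).gaussNorm (NormedField.toAbsoluteValue ℚ_[p]) c ≤ c ^ P.natDegree := by
    refine gaussNorm_le_of_forall fun j => ?_
    show ‖(P * Q).coeff j‖ * c ^ j ≤ _
    rw [hF, hPdeg, hcl]
    split_ifs with h1 h2
    · rw [zero_mul]; positivity
    · rw [h2, hcl, one_mul]
    · exact mul_le_of_le_one_right (by positivity) (pow_le_one₀ hc.le hc1)
  have hGP := (hP.gaussNorm_eq_of_gaussNorm_mul_le isNonarchimedean_toAbsoluteValue hc hQ0 hG).1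
  refine irreducible_of_gaussNorm_eq hc (hPdeg ▸ hl) (t := -e) (hPdeg ▸ hcl)
    (hPdeg ▸ (Nat.isCoprime_iff_coprime.2 hel.symm).neg_right) ?_ ?_
  · rw [hGP, hP0, hPdeg, hcl]
  · rw [hGP, hP.leadingCoeff, norm_one, one_mul]

theorem irreducible_cofactor (hlk : l < k) (hekl : Nat.Coprime e (k - l))
    (hF : ∀ j, ‖(P * Q).coeff j‖ = if k < j then 0 else if j = l then 1 else (p : ℝ) ^ (-(e : ℤ)))
    (hP : P.Monic) (hPdeg : P.natDegree = l) (hQ0 : ‖Q.coeff 0‖ = 1)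
    (hQdeg : Q.natDegree = k - l) (hQlead : ‖Q.leadingCoeff‖ = (p : ℝ) ^ (-(e : ℤ))) :
    Irreducible Q := by
  obtain ⟨c, hc, hcl⟩ := exists_pos_pow_eq_zpow (p := p) e (d := k - l) (by omega)
  have hc1 : 1 ≤ c := (one_le_pow_iff_of_nonneg hc.le (n := k - l) (by omega)).1 (by
    rw [hcl]; exact one_le_zpow₀ (by exact_mod_cast hp.out.one_lt.le) (by omega))
  have hG : (P * Q).gaussNorm (NormedField.toAbsoluteValue ℚ_[p]) c ≤ c ^ P.natDegree := by
    refine gaussNorm_le_of_forall fun j => ?_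
    show ‖(P * Q).coeff j‖ * c ^ j ≤ _
    rw [hF, hPdeg]
    split_ifs with h1 h2
    · rw [zero_mul]; positivity
    · rw [h2, one_mul]
    · calc (p : ℝ) ^ (-(e : ℤ)) * c ^ j ≤ (p : ℝ) ^ (-(e : ℤ)) * c ^ (l + (k - l)) :=
            mul_le_mul_of_nonneg_left (pow_le_pow_right₀ hc1 (by omega)) (by positivity)
        _ = c ^ l := by
            rw [pow_add, hcl, mul_left_comm, ← zpow_add₀ (by exact_mod_cast hp.out.ne_zero),
              neg_add_cancel, zpow_zero, mul_one]
  have hGQ := (hP.gaussNorm_eq_of_gaussNorm_mul_le isNonarchimedean_toAbsoluteValue hc hQ0 hG).2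
  refine irreducible_of_gaussNorm_eq hc (by rw [hQdeg]; omega) (t := e) (hQdeg ▸ hcl)
    (hQdeg ▸ Nat.isCoprime_iff_coprime.2 hekl.symm) (by rw [hGQ, hQ0]) ?_
  rw [hGQ, hQlead, hQdeg, hcl, ← zpow_add₀ (by exact_mod_cast hp.out.ne_zero), neg_add_cancel,
    zpow_zero]

end TwoSegments

theorem exists_irreducible_factors_of_norm_coeff (F : ℚ_[p][X]) {k l e : ℕ} (hl : 0 < l)
    (hlk : l < k) (he : 0 < e) (hel : Nat.Coprime e l) (hekl : Nat.Coprime e (k - l))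
    (hF : ∀ j, ‖F.coeff j‖ = if k < j then 0 else if j = l then 1 else (p : ℝ) ^ (-(e : ℤ))) :
    ∃ P Q : ℚ_[p][X], Irreducible P ∧ Irreducible Q ∧ ¬Associated P Q ∧
      P.natDegree = l ∧ Q.natDegree = k - l ∧ F = P * Q := by
  have hpe : (p : ℝ) ^ (-(e : ℤ)) < 1 :=
    zpow_lt_one_of_neg₀ (by exact_mod_cast hp.out.one_lt) (by omega)
  have hpe0 : (0 : ℝ) < (p : ℝ) ^ (-(e : ℤ)) := zpow_pos (by exact_mod_cast hp.out.pos) _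
  obtain ⟨P, Q, hP, hPdeg, hQ0, rfl⟩ := exists_monic_mul_of_norm_coeff F (l := l)
    (fun j => by rw [hF]; split_ifs <;> first | exact zero_le_one | exact le_rfl | exact hpe.le)
    (fun j hj => by rw [hF, if_neg (by omega), if_neg (by omega)]; exact hpe)
    (by rw [hF, if_neg (by omega), if_pos rfl])
  have hFdeg : (P * Q).natDegree = k := by
    refine natDegree_eq_of_le_of_coeff_ne_zero ?_ ?_
    · exact natDegree_le_iff_coeff_eq_zero.2 fun j hj => norm_eq_zero.1 <| by
        rw [hF, if_pos (by exact_mod_cast hj)]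
    · exact norm_ne_zero_iff.1 <| by rw [hF, if_neg (lt_irrefl k), if_neg hlk.ne']; exact hpe0.ne'
  have hQ : Q ≠ 0 := fun h => by simp [h] at hQ0
  have hQdeg : Q.natDegree = k - l := by
    rw [natDegree_mul hP.ne_zero hQ, hPdeg] at hFdeg; omega
  have hP0 : ‖P.coeff 0‖ = (p : ℝ) ^ (-(e : ℤ)) := by
    have := hF 0
    rwa [if_neg (by omega), if_neg (by omega), mul_coeff_zero, norm_mul, hQ0, mul_one] at this
  have hQlead : ‖Q.leadingCoeff‖ = (p : ℝ) ^ (-(e : ℤ)) := by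
    have := hF k
    rwa [if_neg (lt_irrefl k), if_neg hlk.ne', ← hFdeg, coeff_natDegree, leadingCoeff_mul,
      hP.leadingCoeff, one_mul] at this
  refine ⟨P, Q, irreducible_monic_factor hl hel hF hP hPdeg hQ0 hP0,
    irreducible_cofactor hlk hekl hF hP hPdeg hQ0 hQdeg hQlead, ?_, hPdeg, hQdeg, rfl⟩
  -- `Q = P * C r` is impossible: it would give `1 = ‖Q(0)‖ = ‖P(0)‖ ‖r‖ = p^{-2e}`.
  rintro ⟨u, hu⟩
  obtain ⟨r, -, hr⟩ := Polynomial.isUnit_iff.1 u.isUnit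
  have hr' : ‖r‖ = (p : ℝ) ^ (-(e : ℤ)) := by
    rw [← hQlead, ← hu, ← hr, leadingCoeff_mul, leadingCoeff_C, hP.leadingCoeff, one_mul]
  have h0 : ‖Q.coeff 0‖ = ‖P.coeff 0‖ * ‖r‖ := by rw [← hu, ← hr, coeff_mul_C, norm_mul]
  rw [hQ0, hP0, hr'] at h0
  nlinarith

end Padic

namespace Padic

variable {p : ℕ} [hp : Fact p.Prime] {n k l : ℕ}

theorem norm_natCast_factorial_eq_one {m : ℕ} (hm : m < p) : ‖(m.factorial : ℚ_[p])‖ = 1 :=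
  norm_natCast_eq_one_iff.2 <| (Nat.Prime.coprime_iff_not_dvd hp.out).2 fun h => by
    have := (Nat.Prime.dvd_factorial hp.out).1 h; omega

theorem norm_natCast_choose {x m : ℕ} (hm : m < p) :
    ‖(x.choose m : ℚ_[p])‖ = ‖(x.descFactorial m : ℚ_[p])‖ := by
  rw [Nat.descFactorial_eq_factorial_mul_choose, Nat.cast_mul, norm_mul,
    norm_natCast_factorial_eq_one hm, one_mul]

-- `n - i` and `n - l` differ by `l - i`, which is nonzero and smaller than `p` in absolute value.
theorem norm_natCast_sub_eq_one (hkp : k < p) (hkn : k < n) (hlk : l ≤ k) (hpl : p ∣ n - l)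
    {i : ℕ} (hik : i ≤ k) (hil : i ≠ l) : ‖((n - i : ℕ) : ℚ_[p])‖ = 1 := by
  refine norm_natCast_eq_one_iff.2 <| (Nat.Prime.coprime_iff_not_dvd hp.out).2 fun hpi => hil ?_
  have hdvd : (p : ℤ) ∣ (l : ℤ) - i := by
    have := dvd_sub (Int.natCast_dvd_natCast.2 hpi) (Int.natCast_dvd_natCast.2 hpl)
    rwa [Nat.cast_sub (by omega), Nat.cast_sub (by omega), sub_sub_sub_cancel_left] at this
  have := Int.eq_zero_of_abs_lt_dvd hdvd (abs_sub_lt_iff.2 ⟨by omega, by omega⟩)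
  omega

theorem norm_prod_natCast_sub (hkp : k < p) (hkn : k < n) (hlk : l ≤ k) (hpl : p ∣ n - l)
    {s : Finset ℕ} (hs : ∀ i ∈ s, i ≤ k) :
    ‖((∏ i ∈ s, (n - i) : ℕ) : ℚ_[p])‖ = if l ∈ s then ‖((n - l : ℕ) : ℚ_[p])‖ else 1 := by
  rw [Nat.cast_prod, norm_prod, ← Finset.prod_ite_eq' s l fun i => ‖((n - i : ℕ) : ℚ_[p])‖]
  refine Finset.prod_congr rfl fun i hi => ?_
  split_ifs with h
  · rw [h]
  · exact norm_natCast_sub_eq_one hkp hkn hlk hpl (hs i hi) h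

end Padic

section Coefficients

open Padic

variable {p : ℕ} [Fact p.Prime] {n k l : ℕ}

theorem coeff_Fp (a : ℕ → ℤ) (j : ℕ) :
    (Fp p n k a).coeff j = if j ≤ k then ((a j * c n k j : ℤ) : ℚ_[p]) else 0 := by
  simp only [Fp, finsetSum_coeff, coeff_C_mul_X_pow, Finset.sum_ite_eq, Finset.mem_range,
    Nat.lt_succ_iff]

theorem norm_c (hkp : k < p) (hkn : k < n) (hlk : l ≤ k) (hpl : p ∣ n - l) {j : ℕ}
    (hj : j ≤ k) : ‖(c n k j : ℚ_[p])‖ = if j = l then 1 else ‖((n - l : ℕ) : ℚ_[p])‖ := by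
  have h1 : ‖(n.choose j : ℚ_[p])‖ = if l < j then ‖((n - l : ℕ) : ℚ_[p])‖ else 1 := by
    rw [norm_natCast_choose (by omega), Nat.descFactorial_eq_prod_range,
      norm_prod_natCast_sub hkp hkn hlk hpl fun i hi => by simp at hi; omega]
    simp
  have h2 : ‖((n - j - 1).choose (k - j) : ℚ_[p])‖ =
      if j < l then ‖((n - l : ℕ) : ℚ_[p])‖ else 1 := by
    have : ∏ i ∈ Finset.range (k - j), (n - j - 1 - i) =
        ∏ i ∈ Finset.Ico (j + 1) (k + 1), (n - i) := by
      rw [Finset.prod_Ico_eq_prod_range, Nat.add_sub_add_right]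
      simp only [Nat.sub_sub]
    rw [norm_natCast_choose (by omega), Nat.descFactorial_eq_prod_range, this,
      norm_prod_natCast_sub hkp hkn hlk hpl fun i hi => by simp at hi; omega]
    simp only [Finset.mem_Ico]
    split_ifs <;> first | rfl | omega
  rw [c]
  push_cast
  rw [norm_mul, norm_mul, norm_pow, norm_neg, norm_one, one_pow, one_mul, h1, h2]
  split_ifs <;> first | omega | simp

theorem norm_coeff_Fp {a : ℕ → ℤ} (hkp : k < p) (hkn : k < n) (hlk : l ≤ k) (hpl : p ∣ n - l)
    (ha : ∀ j ≤ k, ¬(p : ℤ) ∣ a j) (j : ℕ) :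
    ‖(Fp p n k a).coeff j‖ =
      if k < j then 0 else if j = l then 1 else (p : ℝ) ^ (-(padicValNat p (n - l) : ℤ)) := by
  rw [coeff_Fp]
  rcases lt_or_ge k j with hkj | hj
  · rw [if_neg (not_le.2 hkj), if_pos hkj, norm_zero]
  have ha1 : ‖(a j : ℚ_[p])‖ = 1 :=
    le_antisymm (norm_int_le_one _) (not_lt.1 fun h => ha j hj (norm_intCast_lt_one_iff.1 h))
  rw [if_pos hj, if_neg (not_lt.2 hj), Int.cast_mul, norm_mul, ha1, one_mul,
    norm_c hkp hkn hlk hpl hj,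
    norm_eq_zpow_neg_valuation (by exact_mod_cast (by omega : n - l ≠ 0)), valuation_natCast]

end Coefficients

theorem F_factors_into_two_irreducibles_general (n k : ℕ) (hn : n ≥ k + 2)
    (p : ℕ) [hp : Fact p.Prime] (hpk : k < p)
    (l : ℕ) (hl1 : 1 ≤ l) (hl2 : l ≤ k - 1) (hpl : p ∣ (n - l))
    (e : ℕ) (he : e = padicValNat p (n - l))
    (hd : Nat.gcd e l = 1) (hd' : Nat.gcd e (k - l) = 1)
    (a : ℕ → ℤ) (ha : ∀ j ≤ k, a j ≠ 0 ∧ ∀ q : ℕ, q.Prime → (q : ℤ) ∣ a j → q ≤ k) :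
    ∃ g h : Polynomial ℚ_[p], Irreducible g ∧ Irreducible h ∧ ¬Associated g h ∧
      g.natDegree = l ∧ h.natDegree = k - l ∧
      ∃ u : (Polynomial ℚ_[p])ˣ, Fp p n k a = ↑u * (g * h) := by
  subst he
  have hnorm := norm_coeff_Fp hpk (by omega) (by omega) hpl
    fun j hj hdvd => by have := (ha j hj).2 p hp.out hdvd; omega
  obtain ⟨P, Q, hP, hQ, hPQ, hPdeg, hQdeg, hF⟩ :=
    Padic.exists_irreducible_factors_of_norm_coeff (Fp p n k a) hl1 (by omega)
      (one_le_padicValNat_of_dvd (by omega) hpl) hd hd' hnorm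
  exact ⟨P, Q, hP, hQ, hPQ, hPdeg, hQdeg, 1, by rw [Units.val_one, one_mul, hF]⟩

theorem F_factors_into_two_irreducibles (n k : ℕ) (hk : k + 2 ≥ 4) (hn : n ≥ k + 2)
    (p : ℕ) [hp : Fact p.Prime] (hpk : k < p)
    (l : ℕ) (hl1 : 1 ≤ l) (hl2 : l ≤ k - 1) (hpl : p ∣ (n - l))
    (e : ℕ) (he : e = padicValNat p (n - l))
    (hd : Nat.gcd e l = 1) (hd' : Nat.gcd e (k - l) = 1)
    (a : ℕ → ℤ) (ha : ∀ j ≤ k, a j ≠ 0 ∧ ∀ q : ℕ, q.Prime → (q : ℤ) ∣ a j → q ≤ k) :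
    ∃ g h : Polynomial ℚ_[p], Irreducible g ∧ Irreducible h ∧ ¬Associated g h ∧
      g.natDegree = l ∧ h.natDegree = k - l ∧
      ∃ u : (Polynomial ℚ_[p])ˣ, Fp p n k a = ↑u * (g * h) :=
  F_factors_into_two_irreducibles_general n k hn p (hp := hp) hpk l hl1 hl2 hpl e he hd hd' a ha
end

section
/- Let n, k be positive integers with n ≥ k+2 ≥ 4. Let p > k be a prime and e > 0 be such that p^e exactly divides n (i.e., e = ord_p(n)). Then every irreducible factor of F_{n,k}(x) over the p-adic field ℚ_p has degree a multiple of k/D, where D = gcd(e, k). -/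
open Polynomial

/-!
Every coefficient of `F_{n,k}` other than the constant one has `p`-adic valuation exactly
`e = ord_p(n)`, while the constant one is a `p`-adic unit. So the Newton polygon of `F_{n,k}` is a
single segment of slope `e / k`: every root `α` of `F_{n,k}` in `\bar{ℚ}_p` has `‖α‖ ^ k = p ^ e`.
If `α` is a root of an irreducible factor `g` of degree `d`, then `‖α‖ ^ d` is the norm of the
constant coefficient of the minimal polynomial of `α`, an integral power of `p`. Hence `k ∣ e d`,
that is, `k / gcd(e, k) ∣ d`.
-/

theorem Nat.div_gcd_dvd_of_dvd_mul {k e d : ℕ} (hk : 0 < k) (h : k ∣ e * d) :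
    k / e.gcd k ∣ d := by
  refine (Nat.coprime_div_gcd_div_gcd (Nat.gcd_pos_of_pos_right e hk)).symm.dvd_of_dvd_mul_left ?_
  rw [← Nat.mul_div_right_comm (Nat.gcd_dvd_left e k)]
  exact Nat.div_dvd_div (Nat.gcd_dvd_right e k) h

theorem Nat.Prime.not_dvd_descFactorial_sub {p n : ℕ} (hp : p.Prime) (hn : n ≠ 0) (hpn : p ∣ n)
    {s t : ℕ} (hst : s + t < p) : ¬ p ∣ (n - s - 1).descFactorial t := by
  rw [Nat.descFactorial_eq_prod_range]
  intro h
  obtain ⟨i, hi, hdvd⟩ := (hp.prime.dvd_finsetProd_iff _).1 h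
  rw [Finset.mem_range] at hi
  have hpn' : p ≤ n := Nat.le_of_dvd (Nat.pos_of_ne_zero hn) hpn
  have hm : p ∣ s + 1 + i := by
    have := Nat.dvd_sub hpn hdvd
    rwa [show n - (n - s - 1 - i) = s + 1 + i by omega] at this
  exact absurd (Nat.le_of_dvd (by omega) hm) (by omega)

theorem Nat.Prime.not_dvd_choose_sub {p n : ℕ} (hp : p.Prime) (hn : n ≠ 0) (hpn : p ∣ n)
    {s t : ℕ} (hst : s + t < p) : ¬ p ∣ (n - s - 1).choose t := fun h ↦
  hp.not_dvd_descFactorial_sub hn hpn hst <|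
    Nat.descFactorial_eq_factorial_mul_choose (n - s - 1) t ▸ h.mul_left _

section Ultrametric

variable {ι M : Type*} [SeminormedAddCommGroup M] [IsUltrametricDist M]

theorem IsUltrametricDist.norm_sum_lt_of_forall_norm_lt {s : Finset ι} {f : ι → M} {C : ℝ}
    (hC : 0 < C) (h : ∀ i ∈ s, ‖f i‖ < C) : ‖∑ i ∈ s, f i‖ < C := by
  induction s using Finset.cons_induction with
  | empty => simpa using hC
  | cons i s hi ih =>
    rw [Finset.sum_cons]
    simp only [Finset.mem_cons, forall_eq_or_imp] at h
    exact (IsUltrametricDist.norm_add_le_max _ _).trans_lt (max_lt h.1 (ih h.2))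

theorem IsUltrametricDist.sum_ne_zero_of_norm_lt {s : Finset ι} {f : ι → M} {i₀ : ι}
    (hi₀ : i₀ ∈ s) (hpos : 0 < ‖f i₀‖) (h : ∀ i ∈ s, i ≠ i₀ → ‖f i‖ < ‖f i₀‖) :
    ∑ i ∈ s, f i ≠ 0 := by
  classical
  rw [← Finset.add_sum_erase s f hi₀, ne_eq, add_eq_zero_iff_eq_neg]
  intro hsum
  have := norm_sum_lt_of_forall_norm_lt hpos fun i hi ↦ h i (Finset.mem_of_mem_erase hi)
    (Finset.ne_of_mem_erase hi)
  rw [← norm_neg, ← hsum] at this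
  exact this.false

end Ultrametric

theorem norm_pow_mul_eq_one_of_sum_eq_zero {L : Type*} [NormedField L] [IsUltrametricDist L]
    {k : ℕ} (hk : 0 < k) {B : ℕ → L} {r : ℝ} (hr : r < 1) (hB₀ : ‖B 0‖ = 1)
    (hB : ∀ j, 1 ≤ j → j ≤ k → ‖B j‖ = r) {α : L}
    (hα : ∑ j ∈ Finset.range (k + 1), B j * α ^ j = 0) : ‖α‖ ^ k * r = 1 := by
  have hr₀ : 0 ≤ r := hB 1 le_rfl hk ▸ norm_nonneg _
  have hterm : ∀ j, 1 ≤ j → j ≤ k → ‖B j * α ^ j‖ = r * ‖α‖ ^ j := fun j hj hjk ↦ by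
    rw [norm_mul, norm_pow, hB j hj hjk]
  by_contra hne
  rcases lt_or_gt_of_ne hne with hlt | hgt
  · -- the constant term dominates
    refine IsUltrametricDist.sum_ne_zero_of_norm_lt (i₀ := 0) (by simp) (by simp [hB₀])
      (fun j hj hj₀ ↦ ?_) hα
    rw [Finset.mem_range] at hj
    rw [hterm j (by omega) (by omega), pow_zero, mul_one, hB₀]
    rcases le_or_gt ‖α‖ 1 with hα1 | hα1
    · calc r * ‖α‖ ^ j ≤ r * 1 := by gcongr; exact pow_le_one₀ (norm_nonneg _) hα1
        _ < 1 := by rwa [mul_one]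
    · calc r * ‖α‖ ^ j ≤ r * ‖α‖ ^ k := by gcongr; exacts [hα1.le, by omega]
        _ < 1 := by rwa [mul_comm]
  · -- the leading term dominates
    have hα1 : 1 < ‖α‖ := by
      by_contra! h
      exact hgt.not_ge (mul_le_one₀ (pow_le_one₀ (norm_nonneg _) h) hr₀ hr.le)
    have hr₀' : 0 < r := pos_of_mul_pos_right (one_pos.trans hgt) (by positivity)
    refine IsUltrametricDist.sum_ne_zero_of_norm_lt (i₀ := k) (by simp) ?_
      (fun j hj hjk ↦ ?_) hα
    · rw [hterm k hk le_rfl]; linarith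
    rw [Finset.mem_range] at hj
    rw [hterm k hk le_rfl]
    rcases Nat.eq_zero_or_pos j with rfl | hj₀
    · rw [pow_zero, mul_one, hB₀]; linarith
    · rw [hterm j hj₀ (by omega)]
      exact mul_lt_mul_of_pos_left (pow_lt_pow_right₀ hα1 (by omega)) hr₀'

namespace Padic

variable {p : ℕ} [hp : Fact p.Prime]

theorem norm_natCast_eq_one_of_not_dvd {m : ℕ} (h : ¬ p ∣ m) : ‖(m : ℚ_[p])‖ = 1 :=
  norm_natCast_eq_one_iff.2 ((Nat.Prime.coprime_iff_not_dvd hp.out).2 h)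

theorem norm_intCast_eq_one_of_prime_dvd_le {k : ℕ} (hkp : k < p) {a : ℤ}
    (ha : ∀ q : ℕ, q.Prime → (q : ℤ) ∣ a → q ≤ k) : ‖(a : ℚ_[p])‖ = 1 :=
  (norm_int_le_one a).antisymm <| not_lt.1 fun h ↦
    absurd (ha p hp.out (norm_intCast_lt_one_iff.1 h)) hkp.not_ge

theorem norm_choose_of_dvd {n j : ℕ} (hpn : p ∣ n) (hj₀ : 0 < j) (hjp : j < p) :
    ‖(n.choose j : ℚ_[p])‖ = ‖(n : ℚ_[p])‖ := by
  obtain ⟨i, rfl⟩ := Nat.exists_eq_add_of_lt hj₀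
  rcases n with _ | m
  · simp
  -- `C(m, i)` and `i + 1` are `p`-adic units in `(m + 1) * C(m, i) = C(m + 1, i + 1) * (i + 1)`
  have h := congrArg (fun x : ℕ ↦ ‖(x : ℚ_[p])‖) (Nat.add_one_mul_choose_eq m i)
  have hchoose : ‖(m.choose i : ℚ_[p])‖ = 1 := norm_natCast_eq_one_of_not_dvd <| by
    simpa using hp.out.not_dvd_choose_sub m.succ_ne_zero hpn (s := 0) (t := i) (by omega)
  have hi : ‖((i + 1 : ℕ) : ℚ_[p])‖ = 1 :=
    norm_natCast_eq_one_of_not_dvd fun h ↦ absurd (Nat.le_of_dvd (by omega) h) (by omega)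
  simp only [Nat.cast_mul, norm_mul, hchoose, hi, mul_one] at h
  simpa [add_assoc] using h.symm

theorem dvd_of_norm_pow_eq_pow {x : ℚ_[p]} (hx : x ≠ 0) {k m : ℕ}
    (h : ‖x‖ ^ k = (p : ℝ) ^ m) : k ∣ m := by
  have hp1 : (1 : ℝ) < p := by exact_mod_cast hp.out.one_lt
  rw [norm_eq_zpow_neg_valuation hx, ← zpow_natCast, ← zpow_mul, ← zpow_natCast] at h
  have := zpow_right_injective₀ (by positivity) hp1.ne' h
  exact Int.natCast_dvd_natCast.1 ⟨-x.valuation, by rw [← this]; ring⟩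

end Padic

theorem PadicAlgCl.norm_pow_natDegree_minpoly {p : ℕ} [Fact p.Prime] (x : PadicAlgCl p) :
    ‖x‖ ^ (minpoly ℚ_[p] x).natDegree = ‖(minpoly ℚ_[p] x).coeff 0‖ := by
  rw [← PadicAlgCl.spectralNorm_eq, spectralNorm.spectralNorm_eq_norm_coeff_zero_rpow, one_div,
    Real.rpow_inv_natCast_pow (norm_nonneg _)
      (minpoly.natDegree_pos (Algebra.IsIntegral.isIntegral x)).ne']

theorem norm_c_eq_norm_choose {p : ℕ} [hp : Fact p.Prime] {n k j : ℕ} (hn : n ≠ 0) (hpn : p ∣ n)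
    (hkp : k < p) (hj : j ≤ k) :
    ‖(c n k j : ℚ_[p])‖ = ‖(n.choose j : ℚ_[p])‖ := by
  have h : ‖((n - j - 1).choose (k - j) : ℚ_[p])‖ = 1 :=
    Padic.norm_natCast_eq_one_of_not_dvd (hp.out.not_dvd_choose_sub hn hpn (by omega))
  simp [c, h]

theorem norm_pow_eq_of_aeval_Fp_eq_zero {p : ℕ} [hp : Fact p.Prime] {n k : ℕ} (hk : 0 < k)
    (hn : n ≠ 0) (hpn : p ∣ n) (hkp : k < p) {a : ℕ → ℤ} (ha : ∀ j ≤ k, ‖(a j : ℚ_[p])‖ = 1)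
    {α : PadicAlgCl p} (hα : aeval α (Fp p n k a) = 0) :
    ‖α‖ ^ k = (p : ℝ) ^ padicValNat p n := by
  have hcoeff : ∀ j ≤ k,
      ‖algebraMap ℚ_[p] (PadicAlgCl p) ((a j * c n k j : ℤ) : ℚ_[p])‖ = ‖(n.choose j : ℚ_[p])‖ :=
    fun j hj ↦ by
      rw [PadicAlgCl.norm_extends, Int.cast_mul, norm_mul, ha j hj, one_mul,
        norm_c_eq_norm_choose hn hpn hkp hj]
  have hroot := norm_pow_mul_eq_one_of_sum_eq_zero hk (Padic.norm_natCast_lt_one_iff.2 hpn)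
    (by simpa using hcoeff 0 k.zero_le)
    (fun j hj hjk ↦ (hcoeff j hjk).trans (Padic.norm_choose_of_dvd hpn hj (by omega)))
    (by simpa only [Fp, map_sum, map_mul, aeval_C, aeval_X_pow] using hα)
  rw [Padic.norm_eq_zpow_neg_valuation (by exact_mod_cast hn), Padic.valuation_natCast,
    zpow_neg, zpow_natCast] at hroot
  exact (eq_inv_of_mul_eq_one_left hroot).trans (inv_inv _)

theorem irreducible_factor_degree_multiple_general (n k : ℕ) (hk : k + 2 ≥ 4)
    (p : ℕ) [hp : Fact p.Prime] (hpk : k < p)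
    (e : ℕ) (he : e = padicValNat p n) (hepos : 0 < e)
    (a : ℕ → ℤ) (ha : ∀ j ≤ k, a j ≠ 0 ∧ ∀ q : ℕ, q.Prime → (q : ℤ) ∣ a j → q ≤ k) :
    ∀ g : Polynomial ℚ_[p], Irreducible g → g ∣ Fp p n k a →
      (k / Nat.gcd e k) ∣ g.natDegree := by
  intro g hg hgF
  have hn : n ≠ 0 := by rintro rfl; simp [he] at hepos
  obtain ⟨α, hα⟩ := IsAlgClosed.exists_aeval_eq_zero (PadicAlgCl p) g
    (degree_pos_of_irreducible hg).ne'
  have hroot : ‖α‖ ^ k = (p : ℝ) ^ e := he ▸ norm_pow_eq_of_aeval_Fp_eq_zero (by omega) hn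
    (dvd_of_one_le_padicValNat (he ▸ hepos)) hpk
    (fun j hj ↦ Padic.norm_intCast_eq_one_of_prime_dvd_le hpk (ha j hj).2)
    (aeval_eq_zero_of_dvd_aeval_eq_zero hgF hα)
  have hα₀ : α ≠ 0 := by
    rintro rfl
    simp [zero_pow (show k ≠ 0 by omega), eq_comm, hp.out.ne_zero] at hroot
  have hdeg : g.natDegree = (minpoly ℚ_[p] α).natDegree := by
    rw [minpoly.Irreducible.eq_minpoly hg hα, natDegree_C_mul (leadingCoeff_ne_zero.2 hg.ne_zero)]
  have hdvd : k ∣ e * g.natDegree := by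
    refine Padic.dvd_of_norm_pow_eq_pow
      (minpoly.coeff_zero_ne_zero (Algebra.IsIntegral.isIntegral (R := ℚ_[p]) α) hα₀) ?_
    rw [← PadicAlgCl.norm_pow_natDegree_minpoly, ← hdeg, ← pow_mul, mul_comm, pow_mul, hroot,
      ← pow_mul]
  exact Nat.div_gcd_dvd_of_dvd_mul (by omega) hdvd

theorem irreducible_factor_degree_multiple (n k : ℕ) (hk : k + 2 ≥ 4) (hn : n ≥ k + 2)
    (p : ℕ) [hp : Fact p.Prime] (hpk : k < p)
    (e : ℕ) (he : e = padicValNat p n) (hepos : 0 < e)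
    (a : ℕ → ℤ) (ha : ∀ j ≤ k, a j ≠ 0 ∧ ∀ q : ℕ, q.Prime → (q : ℤ) ∣ a j → q ≤ k) :
    ∀ g : Polynomial ℚ_[p], Irreducible g → g ∣ Fp p n k a →
      (k / Nat.gcd e k) ∣ g.natDegree :=
  irreducible_factor_degree_multiple_general n k hk p (hp := hp) hpk e he hepos a ha
end

section
/- Let n, k be positive integers with n ≥ k+2 ≥ 4. If there exists a prime p > k with ord_p(n) = 1 (p divides n exactly to the first power), then F_{n,k}(x) is irreducible over ℚ (indeed, x^k F_{n,k}(1/x) is an Eisenstein polynomial with respect to p). -/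
open Polynomial

/-- `F n k a = ∑_{j=0}^{k} a_j c_j x^j` as a polynomial over `ℤ`. -/
noncomputable def Fz (n k : ℕ) (a : ℕ → ℤ) : Polynomial ℤ :=
  ∑ j ∈ Finset.range (k + 1), Polynomial.C (a j * c n k j) * Polynomial.X ^ j

/-!
Since `p` divides `n` exactly once and `p > k`, it divides `C(n, j)` exactly once for
`1 ≤ j ≤ k` (in `j! C(n, j) = n (n - 1) ⋯ (n - j + 1)` only the factor `n` is divisible by
`p`), and for the same reason `p ∤ C(n - 1, k)`; the `a_j` are prime to `p`. So the reversed
polynomial `x^k F(1/x)` has leading coefficient `± a_0 C(n - 1, k)` prime to `p`, all other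
coefficients divisible by `p`, and constant term `a_k C(n, k)` not divisible by `p²`: it is
Eisenstein at `p`. Eisenstein's criterion gives irreducibility over `ℚ` even without
primitivity (divide out the content), and reversal preserves irreducibility since `F(0) ≠ 0`.
-/

namespace Nat.Prime

variable {p n : ℕ}

/-- Each factor `n - s - i` of the falling factorial `(n - s)⋯(n - s - m + 1)` is congruent to
`-(s + i)` modulo `p`, and `0 < s + i < p`. -/
theorem not_dvd_choose_sub_s8 (hp : p.Prime) (hpn : p ∣ n) (hn : n ≠ 0) {s m : ℕ} (hs : 0 < s)
    (hsm : s + m ≤ p) : ¬ p ∣ (n - s).choose m := by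
  intro h
  have hdesc : p ∣ (n - s).descFactorial m := by
    rw [Nat.descFactorial_eq_factorial_mul_choose]
    exact h.mul_left _
  rw [Nat.descFactorial_eq_prod_range, hp.prime.dvd_finsetProd_iff] at hdesc
  obtain ⟨i, hi, hdvd⟩ := hdesc
  have hi : i < m := Finset.mem_range.mp hi
  have hpn' : p ≤ n := Nat.le_of_dvd (Nat.pos_of_ne_zero hn) hpn
  have hsi : p ∣ s + i := by
    have := Nat.dvd_sub hpn hdvd
    rwa [show n - (n - s - i) = s + i by omega] at this
  have := Nat.le_of_dvd (by omega) hsi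
  omega

theorem padicValNat_choose_of_dvd (hp : p.Prime) (hpn : p ∣ n) {j : ℕ} (hj : 0 < j)
    (hjp : j < p) : padicValNat p (n.choose j) = padicValNat p n := by
  have : Fact p.Prime := ⟨hp⟩
  rcases eq_or_ne n 0 with rfl | hn
  · rw [Nat.choose_eq_zero_of_lt hj]
  obtain ⟨m, rfl⟩ := Nat.exists_eq_add_one_of_ne_zero hn
  obtain ⟨i, rfl⟩ := Nat.exists_eq_add_one_of_ne_zero hj.ne'
  have hchoose : ¬ p ∣ m.choose i := by
    simpa using hp.not_dvd_choose_sub_s8 hpn hn one_pos (by omega : 1 + i ≤ p)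
  have hi : ¬ p ∣ i + 1 := fun h => by have := Nat.le_of_dvd (by omega) h; omega
  have hle : p ≤ m + 1 := Nat.le_of_dvd m.succ_pos hpn
  have key := congrArg (padicValNat p) (Nat.add_one_mul_choose_eq m i)
  rwa [padicValNat.mul hn (Nat.choose_pos (by omega)).ne', padicValNat.mul
    (Nat.choose_pos (by omega)).ne' (by omega), padicValNat.eq_zero_of_not_dvd hchoose,
    padicValNat.eq_zero_of_not_dvd hi, add_zero, add_zero, eq_comm] at key

end Nat.Prime

namespace Polynomial

theorem isEisensteinAt_reverse {R : Type*} [CommSemiring R] {f : R[X]} {P : Ideal R}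
    (h0 : f.coeff 0 ∉ P) (hmem : ∀ i, i ≠ 0 → f.coeff i ∈ P)
    (hlead : f.leadingCoeff ∉ P ^ 2) :
    f.reverse.IsEisensteinAt P := by
  have hf0 : f.coeff 0 ≠ 0 := fun h => h0 (h ▸ P.zero_mem)
  have hdeg : f.reverse.natDegree = f.natDegree := by
    rw [reverse_natDegree, natTrailingDegree_eq_zero.mpr (Or.inr hf0), Nat.sub_zero]
  refine ⟨?_, fun {i} hi => ?_, ?_⟩
  · rwa [reverse_leadingCoeff, trailingCoeff, natTrailingDegree_eq_zero.mpr (Or.inr hf0)]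
  · rw [hdeg] at hi
    rw [coeff_reverse, revAt_le hi.le]
    exact hmem _ (by omega)
  · rwa [coeff_zero_reverse]

theorem reverse_map {R S : Type*} [Semiring R] [Semiring S] {φ : R →+* S}
    (hφ : Function.Injective φ) (f : R[X]) : (f.map φ).reverse = f.reverse.map φ := by
  rw [reverse, reverse, natDegree_map_eq_of_injective hφ, reflect_map]

section NoZeroDivisors

variable {R : Type*} [Semiring R] [NoZeroDivisors R]

noncomputable def mirrorMulEquiv : R[X] ≃* R[X] where
  toFun := mirror
  invFun := mirror
  left_inv := mirror_mirror
  right_inv := mirror_mirror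
  map_mul' p q := mirror_mul_of_domain p q

theorem irreducible_reverse_iff {f : R[X]} (h0 : f.coeff 0 ≠ 0) :
    Irreducible f.reverse ↔ Irreducible f := by
  have hmirror : f.mirror = f.reverse := by
    rw [mirror, natTrailingDegree_eq_zero.mpr (Or.inr h0), pow_zero, mul_one]
  rw [← hmirror]
  exact MulEquiv.irreducible_iff mirrorMulEquiv

end NoZeroDivisors

namespace IsEisensteinAt

variable {R : Type*} [CommRing R] [IsDomain R] {P : Ideal R}

theorem of_C_mul {c : R} {g : R[X]} (h : (C c * g).IsEisensteinAt P)
    (hP : P.IsPrime) : g.IsEisensteinAt P := by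
  have hc : c ∉ P := fun hc => h.leading <| by
    rw [leadingCoeff_mul, leadingCoeff_C]
    exact P.mul_mem_right _ hc
  have hc0 : c ≠ 0 := fun h0 => hc (h0 ▸ P.zero_mem)
  refine ⟨fun hg => h.leading ?_, fun {i} hi => ?_, fun hg => h.notMem ?_⟩
  · rw [leadingCoeff_mul, leadingCoeff_C]
    exact P.mul_mem_left _ hg
  · have hmem := h.mem (by rwa [natDegree_C_mul hc0])
    rw [coeff_C_mul] at hmem
    exact (hP.mem_or_mem hmem).resolve_left hc
  · rw [coeff_C_mul]
    exact (P ^ 2).mul_mem_left _ hg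

theorem irreducible_map [NormalizedGCDMonoid R] {K : Type*} [Field K] [Algebra R K]
    [IsFractionRing R K] {f : R[X]} (hf : f.IsEisensteinAt P) (hP : P.IsPrime)
    (hdeg : 0 < f.natDegree) :
    Irreducible (f.map (algebraMap R K)) := by
  have hcont : f.content ≠ 0 := by
    rw [Ne, content_eq_zero_iff]
    rintro rfl
    simp at hdeg
  have hdecomp := eq_C_content_mul_primPart f
  rw [hdecomp, natDegree_C_mul hcont] at hdeg
  rw [hdecomp] at hf
  have hirr : Irreducible f.primPart :=
    (hf.of_C_mul hP).irreducible hP (isPrimitive_primPart f) hdeg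
  rw [hdecomp, Polynomial.map_mul, map_C, irreducible_isUnit_mul]
  · exact (isPrimitive_primPart f).irreducible_iff_irreducible_map_fraction_map.mp hirr
  · exact isUnit_C.mpr <| isUnit_iff_ne_zero.mpr <|
      (map_ne_zero_iff _ (IsFractionRing.injective R K)).mpr hcont

end IsEisensteinAt

theorem irreducible_map_of_isEisensteinAt_reverse {R : Type*} [CommRing R] [IsDomain R]
    [NormalizedGCDMonoid R] {K : Type*} [Field K] [Algebra R K] [IsFractionRing R K]
    {P : Ideal R} (hP : P.IsPrime) {f : R[X]} (hf : f.reverse.IsEisensteinAt P)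
    (h0 : f.coeff 0 ≠ 0) (hdeg : 0 < f.natDegree) : Irreducible (f.map (algebraMap R K)) := by
  have hinj := IsFractionRing.injective R K
  rw [← irreducible_reverse_iff (by rwa [coeff_map, Ne, map_eq_zero_iff _ hinj]),
    reverse_map hinj]
  refine hf.irreducible_map hP ?_
  rwa [reverse_natDegree, natTrailingDegree_eq_zero.mpr (Or.inr h0), Nat.sub_zero]

end Polynomial

section Fz

variable {n k : ℕ} {a : ℕ → ℤ}

theorem coeff_Fz (j : ℕ) : (Fz n k a).coeff j = if j ≤ k then a j * c n k j else 0 := by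
  simp only [Fz, finsetSum_coeff, coeff_C_mul_X_pow, Finset.sum_ite_eq, Finset.mem_range,
    Nat.lt_succ_iff]

theorem natDegree_Fz (h : a k * c n k k ≠ 0) : (Fz n k a).natDegree = k := by
  refine natDegree_eq_of_le_of_coeff_ne_zero ?_ (by rwa [coeff_Fz, if_pos le_rfl])
  refine natDegree_le_iff_coeff_eq_zero.mpr fun j hj => ?_
  rw [coeff_Fz, if_neg (by exact_mod_cast hj.not_ge)]

theorem c_zero : c n k 0 = (-1) ^ k * ((n - 1).choose k : ℤ) := by
  simp [c]

theorem c_self : c n k k = n.choose k := by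
  simp [c]

theorem prime_dvd_c {p : ℕ} (hp : p.Prime) (hpk : k < p) (hord : padicValNat p n = 1)
    {j : ℕ} (hj : 0 < j) (hjk : j ≤ k) : (p : ℤ) ∣ c n k j := by
  have hpn : p ∣ n := dvd_of_one_le_padicValNat hord.ge
  have hval := (hp.padicValNat_choose_of_dvd hpn hj (by omega)).trans hord
  have hdvd : (p : ℤ) ∣ n.choose j :=
    Int.natCast_dvd_natCast.mpr (dvd_of_one_le_padicValNat hval.ge)
  exact (hdvd.mul_left _).mul_right _

theorem not_prime_dvd_c_zero {p : ℕ} (hp : p.Prime) (hpk : k < p) (hord : padicValNat p n = 1) :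
    ¬ (p : ℤ) ∣ c n k 0 := by
  have hpn : p ∣ n := dvd_of_one_le_padicValNat hord.ge
  have hn : n ≠ 0 := by rintro rfl; simp at hord
  have hpZ : Prime (p : ℤ) := Nat.prime_iff_prime_int.mp hp
  rw [c_zero]
  refine hpZ.not_dvd_mul (fun h => hpZ.not_isUnit (isUnit_of_dvd_unit h (isUnit_one.neg.pow k)))
    ?_
  exact Int.natCast_dvd_natCast.not.mpr (hp.not_dvd_choose_sub_s8 hpn hn one_pos (by omega))

theorem not_prime_sq_dvd_c_self {p : ℕ} (hp : p.Prime) (hpk : k < p) (hord : padicValNat p n = 1)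
    (hk : 0 < k) : ¬ (p : ℤ) ^ 2 ∣ c n k k := by
  have : Fact p.Prime := ⟨hp⟩
  have hpn : p ∣ n := dvd_of_one_le_padicValNat hord.ge
  have hval := (hp.padicValNat_choose_of_dvd hpn hk hpk).trans hord
  have hchoose : n.choose k ≠ 0 := by rintro h; simp [h] at hval
  rw [c_self, ← Nat.cast_pow, Int.natCast_dvd_natCast, padicValNat_dvd_iff_le hchoose, hval]
  omega

end Fz

theorem F_irreducible_of_ord_one_general (n k : ℕ) (hk : k + 2 ≥ 4)
    (p : ℕ) (hp : p.Prime) (hpk : k < p) (hord : padicValNat p n = 1)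
    (a : ℕ → ℤ) (ha : ∀ j ≤ k, a j ≠ 0 ∧ ∀ q : ℕ, q.Prime → (q : ℤ) ∣ a j → q ≤ k) :
    Irreducible ((Fz n k a).map (Int.castRingHom ℚ)) ∧
      ((Fz n k a).reverse).IsEisensteinAt (Ideal.span {(p : ℤ)}) := by
  have hpZ : Prime (p : ℤ) := Nat.prime_iff_prime_int.mp hp
  have hpa : ∀ j ≤ k, ¬ (p : ℤ) ∣ a j := fun j hj h => by
    have := (ha j hj).2 p hp h
    omega
  have hcoeff0 : ¬ (p : ℤ) ∣ (Fz n k a).coeff 0 := by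
    rw [coeff_Fz, if_pos k.zero_le]
    exact hpZ.not_dvd_mul (hpa 0 k.zero_le) (not_prime_dvd_c_zero hp hpk hord)
  have hlead : ¬ (p : ℤ) ^ 2 ∣ a k * c n k k := fun h =>
    not_prime_sq_dvd_c_self hp hpk hord (by omega)
      (hpZ.pow_dvd_of_dvd_mul_left 2 (hpa k le_rfl) h)
  have hdeg : (Fz n k a).natDegree = k := natDegree_Fz fun h => hlead (h ▸ dvd_zero _)
  have hEis : (Fz n k a).reverse.IsEisensteinAt (Ideal.span {(p : ℤ)}) := by
    refine isEisensteinAt_reverse ?_ (fun j hj => ?_) ?_ <;>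
      simp only [Ideal.span_singleton_pow, Ideal.mem_span_singleton]
    · exact hcoeff0
    · rw [coeff_Fz]
      split_ifs with hjk
      · exact (prime_dvd_c hp hpk hord (Nat.pos_of_ne_zero hj) hjk).mul_left _
      · exact dvd_zero _
    · rwa [leadingCoeff, hdeg, coeff_Fz, if_pos le_rfl]
  refine ⟨?_, hEis⟩
  rw [← algebraMap_int_eq]
  exact irreducible_map_of_isEisensteinAt_reverse
    ((Ideal.span_singleton_prime hpZ.ne_zero).mpr hpZ) hEis (fun h => hcoeff0 (h ▸ dvd_zero _))
    (by omega)

theorem F_irreducible_of_ord_one (n k : ℕ) (hk : k + 2 ≥ 4) (hn : n ≥ k + 2)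
    (p : ℕ) (hp : p.Prime) (hpk : k < p) (hord : padicValNat p n = 1)
    (a : ℕ → ℤ) (ha : ∀ j ≤ k, a j ≠ 0 ∧ ∀ q : ℕ, q.Prime → (q : ℤ) ∣ a j → q ≤ k) :
    Irreducible ((Fz n k a).map (Int.castRingHom ℚ)) ∧
      ((Fz n k a).reverse).IsEisensteinAt (Ideal.span {(p : ℤ)}) :=
  F_irreducible_of_ord_one_general n k hk p hp hpk hord a ha
end

section
/- Let n be an integer with 8 ≤ n < 125 and n ∉ {8, 50, 98, 100}. Then for every choice of nonzero integers a_0, a_1, a_2, a_3, a_4 each of which has all of its prime factors ≤ 4, the polynomial F_{n,4}(x) = ∑_{j=0}^{4} a_j c_j x^j is irreducible over ℚ. -/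
/-!
Let `p > 4` be a prime (so `p` divides no `a j`) dividing every `c j` except `c m`, with
`p ^ 2 ∤ c 0` and `p ^ 2 ∤ c 4`. The Newton polygon of `F` at `p` then has two edges of lattice
length one, of horizontal lengths `m` and `4 - m`, so by Dumas' theorem every factor of `F` has
degree `0`, `m`, `4 - m` or `4`. For such a polygon Dumas' theorem is elementary: modulo `p` a
factorization `G * H ≡ b X ^ m` forces `G ≡ u X ^ i`, `H ≡ v X ^ j` with `i + j = m`; if `i, j > 0`
then `p ^ 2` divides the constant coefficient, and if `i < deg G`, `j < deg H` it divides the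
leading one. For each `n` in range a finite search finds one such prime with `m ∈ {0, 4}`, or two,
with `m = 1` and `m = 2`, which together exclude every proper factor.
-/

open Polynomial

namespace Polynomial

theorem coeff_eq_zero_of_natTrailingDegree_eq_natDegree {R : Type*} [Semiring R] {g : R[X]}
    (hg : g.natTrailingDegree = g.natDegree) {u : ℕ} (hu : u ≠ g.natDegree) : g.coeff u = 0 := by
  rcases hu.lt_or_gt with hu | hu
  · exact coeff_eq_zero_of_lt_natTrailingDegree (hg ▸ hu)
  · exact coeff_eq_zero_of_natDegree_lt hu

theorem IsPrimitive.isUnit_of_natDegree_eq_zero {R : Type*} [CommSemiring R] {g : R[X]}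
    (hg : g.IsPrimitive) (h : g.natDegree = 0) : IsUnit g := by
  rw [eq_C_of_natDegree_eq_zero h] at hg ⊢
  exact isUnit_C.mpr (hg _ dvd_rfl)

section Domain

variable {R : Type*} [CommRing R] [IsDomain R]

theorem natTrailingDegree_eq_natDegree_of_mul_eq_C_mul_X_pow {g h : R[X]} {b : R} {m : ℕ}
    (hb : b ≠ 0) (hgh : g * h = C b * X ^ m) :
    g.natTrailingDegree = g.natDegree ∧ g.natDegree + h.natDegree = m := by
  have hgh0 : g * h ≠ 0 := by
    rw [hgh]; exact mul_ne_zero (C_ne_zero.mpr hb) (pow_ne_zero _ X_ne_zero)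
  have hg : g ≠ 0 := left_ne_zero_of_mul hgh0
  have hh : h ≠ 0 := right_ne_zero_of_mul hgh0
  have hdeg := natDegree_mul hg hh
  have htrail := natTrailingDegree_mul hg hh
  rw [hgh, natDegree_C_mul_X_pow _ _ hb] at hdeg
  rw [hgh, C_mul_X_pow_eq_monomial, natTrailingDegree_monomial hb] at htrail
  have := natTrailingDegree_le_natDegree g
  have := natTrailingDegree_le_natDegree h
  omega

/-- Dumas' theorem for the Newton polygon with vertices `(0, 1)`, `(m, 0)`, `(deg, 1)`. -/
theorem natDegree_eq_zero_or_eq_of_dvd_coeff_mul {p : R} (hp : Prime p) {G H : R[X]} {m : ℕ}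
    (hdvd : ∀ k ≠ m, p ∣ (G * H).coeff k) (hm : ¬ p ∣ (G * H).coeff m)
    (h0 : ¬ p ^ 2 ∣ (G * H).coeff 0) (hlead : ¬ p ^ 2 ∣ (G * H).leadingCoeff) :
    G.natDegree = 0 ∨ H.natDegree = 0 ∨ G.natDegree = m ∨ H.natDegree = m := by
  have := (Ideal.span_singleton_prime hp.ne_zero).mpr hp
  set φ := Ideal.Quotient.mk (Ideal.span {p})
  have hφ : ∀ x, φ x = 0 ↔ p ∣ x := Ideal.Quotient.eq_zero_iff_dvd p
  have hb : φ ((G * H).coeff m) ≠ 0 := mt (hφ _).mp hm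
  have hmod : G.map φ * H.map φ = C (φ ((G * H).coeff m)) * X ^ m := by
    ext k
    rw [← Polynomial.map_mul, coeff_map, coeff_C_mul_X_pow]
    split_ifs with hk
    · rw [hk]
    · exact (hφ _).mpr (hdvd k hk)
  obtain ⟨hG, hsum⟩ := natTrailingDegree_eq_natDegree_of_mul_eq_C_mul_X_pow hb hmod
  obtain ⟨hH, -⟩ :=
    natTrailingDegree_eq_natDegree_of_mul_eq_C_mul_X_pow hb ((mul_comm _ _).trans hmod)
  set i := (G.map φ).natDegree
  set j := (H.map φ).natDegree
  have hGdvd : ∀ u ≠ i, p ∣ G.coeff u := fun u hu =>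
    (hφ _).mp (coeff_map φ u ▸ coeff_eq_zero_of_natTrailingDegree_eq_natDegree hG hu)
  have hHdvd : ∀ v ≠ j, p ∣ H.coeff v := fun v hv =>
    (hφ _).mp (coeff_map φ v ▸ coeff_eq_zero_of_natTrailingDegree_eq_natDegree hH hv)
  have hi : i ≤ G.natDegree := natDegree_map_le
  have hj : j ≤ H.natDegree := natDegree_map_le
  have hlow : i = 0 ∨ j = 0 := by
    by_contra! h
    apply h0
    rw [mul_coeff_zero, sq]
    exact mul_dvd_mul (hGdvd 0 h.1.symm) (hHdvd 0 h.2.symm)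
  have hhigh : i = G.natDegree ∨ j = H.natDegree := by
    by_contra! h
    apply hlead
    rw [leadingCoeff_mul, sq]
    exact mul_dvd_mul (hGdvd _ (Ne.symm h.1)) (hHdvd _ (Ne.symm h.2))
  omega

end Domain

theorem irreducible_map_of_forall_natDegree_eq_zero {R K : Type*} [CommRing R] [IsDomain R]
    [NormalizedGCDMonoid R] [Field K] [Algebra R K] [IsFractionRing R K] {f : R[X]}
    (hf : 0 < f.natDegree) (h : ∀ G H : R[X], f = G * H → G.natDegree = 0 ∨ H.natDegree = 0) :
    Irreducible (f.map (algebraMap R K)) := by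
  have hcont : f.content ≠ 0 := mt content_eq_zero_iff.mp (ne_zero_of_natDegree_gt hf)
  have hprim := f.isPrimitive_primPart
  have hirr : Irreducible f.primPart := by
    refine ⟨fun hu => hf.ne' (f.natDegree_primPart ▸ natDegree_eq_zero_of_isUnit hu),
      fun G H hGH => ?_⟩
    have hfGH : f = (C f.content * G) * H := by
      rw [mul_assoc, ← hGH, ← eq_C_content_mul_primPart]
    rcases h _ _ hfGH with hG | hH
    · rw [natDegree_C_mul hcont] at hG
      exact .inl ((isPrimitive_of_dvd hprim (Dvd.intro _ hGH.symm)).isUnit_of_natDegree_eq_zero hG)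
    · exact .inr
        ((isPrimitive_of_dvd hprim (Dvd.intro_left _ hGH.symm)).isUnit_of_natDegree_eq_zero hH)
  have hunit : IsUnit (C (algebraMap R K f.content)) :=
    isUnit_C.mpr ((map_ne_zero_iff _ (IsFractionRing.injective R K)).mpr hcont).isUnit
  rw [f.eq_C_content_mul_primPart, Polynomial.map_mul, map_C, irreducible_isUnit_mul hunit]
  exact hprim.irreducible_iff_irreducible_map_fraction_map.mp hirr

end Polynomial

noncomputable def Fint (n k : ℕ) (a : ℕ → ℤ) : ℤ[X] :=
  ∑ j ∈ Finset.range (k + 1), C (a j * c n k j) * X ^ j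

theorem F_eq_map_Fint (n k : ℕ) (a : ℕ → ℤ) : F n k a = (Fint n k a).map (algebraMap ℤ ℚ) := by
  simp [F, Fint, Polynomial.map_sum]

theorem coeff_Fint (n k : ℕ) (a : ℕ → ℤ) (j : ℕ) :
    (Fint n k a).coeff j = if j ≤ k then a j * c n k j else 0 := by
  simp only [Fint, finsetSum_coeff, coeff_C_mul_X_pow, Finset.sum_ite_eq, Finset.mem_range,
    Nat.lt_succ_iff]

theorem natDegree_Fint {n k : ℕ} {a : ℕ → ℤ} (h : a k * c n k k ≠ 0) :
    (Fint n k a).natDegree = k := by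
  refine natDegree_eq_of_le_of_coeff_ne_zero ?_ (by rwa [coeff_Fint, if_pos le_rfl])
  refine natDegree_le_iff_coeff_eq_zero.mpr fun j hj => ?_
  rw [coeff_Fint, if_neg (not_le.mpr hj)]

/-- `p` is a prime above `k`, hence prime to every admissible `a j`, at which the Newton polygon
of `F n k a` has vertices `(0, 1)`, `(m, 0)`, `(k, 1)`. -/
def IsDumasPrime (n k p m : ℕ) : Prop :=
  m ≤ k ∧ (∀ j ≤ k, j ≠ m → (p : ℤ) ∣ c n k j) ∧ ¬ (p : ℤ) ∣ c n k m ∧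
    ¬ (p : ℤ) ^ 2 ∣ c n k 0 ∧ ¬ (p : ℤ) ^ 2 ∣ c n k k ∧ k < p ∧ p.Prime

instance (n k p m : ℕ) : Decidable (IsDumasPrime n k p m) := by
  unfold IsDumasPrime; infer_instance

theorem IsDumasPrime.natDegree_eq_of_Fint_eq_mul {n k p m : ℕ} (hp : IsDumasPrime n k p m)
    {a : ℕ → ℤ} (ha : ∀ j ≤ k, ∀ q : ℕ, q.Prime → (q : ℤ) ∣ a j → q ≤ k) {G H : ℤ[X]}
    (hGH : Fint n k a = G * H) :
    G.natDegree = 0 ∨ H.natDegree = 0 ∨ G.natDegree = m ∨ H.natDegree = m := by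
  obtain ⟨hmk, hdvd, hm, h0, hk, hkp, hprime⟩ := hp
  have hpZ : Prime (p : ℤ) := Nat.prime_iff_prime_int.mp hprime
  have hpa : ∀ j ≤ k, ¬ (p : ℤ) ∣ a j := fun j hj hpa => (ha j hj p hprime hpa).not_gt hkp
  have hak : a k ≠ 0 := fun h => hpa k le_rfl (h ▸ dvd_zero _)
  have hck : c n k k ≠ 0 := fun h => hk (h ▸ dvd_zero _)
  apply natDegree_eq_zero_or_eq_of_dvd_coeff_mul hpZ <;> rw [← hGH]
  · intro j hj
    rw [coeff_Fint]
    split_ifs with hjk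
    · exact dvd_mul_of_dvd_right (hdvd j hjk hj) _
    · exact dvd_zero _
  · rw [coeff_Fint, if_pos hmk]
    exact hpZ.not_dvd_mul (hpa m hmk) hm
  · rw [coeff_Fint, if_pos k.zero_le]
    exact fun h => h0 (hpZ.pow_dvd_of_dvd_mul_left 2 (hpa 0 k.zero_le) h)
  · rw [leadingCoeff, natDegree_Fint (mul_ne_zero hak hck), coeff_Fint, if_pos le_rfl]
    exact fun h => hk (hpZ.pow_dvd_of_dvd_mul_left 2 (hpa k le_rfl) h)

theorem irreducible_F_of_isDumasPrime {n k : ℕ} {a : ℕ → ℤ} (hk : 0 < k) (hkn : k ≤ n)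
    (ha : ∀ j ≤ k, a j ≠ 0 ∧ ∀ p : ℕ, p.Prime → (p : ℤ) ∣ a j → p ≤ k)
    (hdumas : ∀ d, 0 < d → d < k → ∃ m, m ≠ d ∧ m + d ≠ k ∧ ∃ p, IsDumasPrime n k p m) :
    Irreducible (F n k a) := by
  have hck : c n k k ≠ 0 := by
    simpa [c] using (Nat.choose_pos hkn).ne'
  have hdeg : (Fint n k a).natDegree = k := natDegree_Fint (mul_ne_zero (ha k le_rfl).1 hck)
  rw [F_eq_map_Fint]
  refine irreducible_map_of_forall_natDegree_eq_zero (by omega) fun G H hGH => ?_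
  by_contra! hGH0
  have hsum : G.natDegree + H.natDegree = k := by
    rw [← hdeg, hGH, natDegree_mul (ne_zero_of_natDegree_gt (Nat.pos_of_ne_zero hGH0.1))
      (ne_zero_of_natDegree_gt (Nat.pos_of_ne_zero hGH0.2))]
  obtain ⟨m, hmd, hmd', p, hp⟩ := hdumas G.natDegree (by omega) (by omega)
  have := hp.natDegree_eq_of_Fint_eq_mul (fun j hj => (ha j hj).2) hGH
  omega

theorem exists_isDumasPrime_four : ∀ n ∈ Finset.Ico 8 125, n ∉ ({8, 50, 98, 100} : Finset ℕ) →
    ∀ d ∈ Finset.Ioo 0 4, ∃ m ≤ 4, m ≠ d ∧ m + d ≠ 4 ∧ ∃ p < n + 1, IsDumasPrime n 4 p m := by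
  decide +kernel

theorem F_n_four_irreducible (n : ℕ) (h1 : 8 ≤ n) (h2 : n < 125)
    (hexc : n ∉ ({8, 50, 98, 100} : Set ℕ))
    (a : ℕ → ℤ) (ha : ∀ j ≤ 4, a j ≠ 0 ∧ ∀ p : ℕ, p.Prime → (p : ℤ) ∣ a j → p ≤ 4) :
    Irreducible (F n 4 a) := by
  refine irreducible_F_of_isDumasPrime (by norm_num) (by omega) ha fun d hd0 hd4 => ?_
  obtain ⟨m, -, hmd, hmd', p, -, hp⟩ := exists_isDumasPrime_four n
    (Finset.mem_Ico.mpr ⟨h1, h2⟩) (by simpa using hexc) d (Finset.mem_Ioo.mpr ⟨hd0, hd4⟩)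
  exact ⟨m, hmd, hmd', p, hp⟩
end

section
/- Let n > k ≥ 1 be positive integers and write P_{n,k}(x−1) = ∑_{j=0}^{k} c_j x^j. Then for every j with 0 ≤ j ≤ k, c_j = ∑_{i=j}^{k} (−1)^{i−j} C(n,i) C(i,j) = (−1)^{k−j} C(n,j) C(n−j−1, k−j). -/
/-!
Expanding each `(X - 1)^i` binomially gives the first formula. Since
`C(n,i) C(i,j) = C(n,j) C(n-j,i-j)`, it is `C(n,j)` times a partial alternating sum of the
binomial row `n - j ≥ 1`, and by Pascal's rule such a sum telescopes:
`∑_{m ≤ M} (-1)^m C(N,m) = (-1)^M C(N-1,M)`.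
-/

open Polynomial Finset

/-- `P n k` is the truncation of the binomial expansion of `(1+x)^n` at the `k`-th stage,
i.e. `∑_{j=0}^{k} C(n,j) x^j`, as a polynomial over `ℚ`. -/
noncomputable def P (n k : ℕ) : Polynomial ℚ :=
  ∑ j ∈ Finset.range (k + 1), Polynomial.C ((n.choose j : ℚ)) * Polynomial.X ^ j

theorem coeff_X_sub_one_pow {R : Type*} [CommRing R] (i j : ℕ) :
    ((X - 1 : R[X]) ^ i).coeff j = (-1) ^ (i - j) * (i.choose j : R) := by
  simpa [sub_eq_add_neg] using coeff_X_add_C_pow (-1 : R) i j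

theorem alternating_sum_range_choose_eq_neg_one_pow_mul_choose {R : Type*} [CommRing R]
    {N : ℕ} (hN : N ≠ 0) (M : ℕ) :
    ∑ m ∈ range (M + 1), (-1 : R) ^ m * (N.choose m : R) = (-1) ^ M * ((N - 1).choose M : R) := by
  obtain ⟨N, rfl⟩ := Nat.exists_eq_succ_of_ne_zero hN
  exact_mod_cast congrArg (Int.cast : ℤ → R) Int.alternating_sum_range_choose_eq_choose

theorem coeff_P_comp_X_sub_one (n k j : ℕ) :
    ((P n k).comp (X - 1)).coeff j =
      ∑ i ∈ Icc j k, (-1 : ℚ) ^ (i - j) * (n.choose i : ℚ) * (i.choose j : ℚ) := by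
  calc ((P n k).comp (X - 1)).coeff j
      = ∑ i ∈ range (k + 1), (-1 : ℚ) ^ (i - j) * (n.choose i : ℚ) * (i.choose j : ℚ) := by
        simp only [P, Polynomial.sum_comp, finsetSum_coeff, mul_comp, C_comp, X_pow_comp,
          coeff_C_mul, coeff_X_sub_one_pow]
        exact sum_congr rfl fun i _ => by ring
    _ = _ := by
        refine (Finset.sum_subset (fun i hi => ?_) fun i hi hi' => ?_).symm
        · simp only [mem_Icc, mem_range] at hi ⊢
          omega
        · have hij : i < j := by simp only [mem_Icc, mem_range] at hi hi'; omega
          simp [Nat.choose_eq_zero_of_lt hij]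

theorem sum_Icc_alternating_choose_mul_choose {R : Type*} [CommRing R] (n : ℕ) {j k : ℕ}
    (hj : j ≤ k) :
    ∑ i ∈ Icc j k, (-1 : R) ^ (i - j) * (n.choose i : R) * (i.choose j : R) =
      (n.choose j : R) * ∑ m ∈ range (k - j + 1), (-1 : R) ^ m * ((n - j).choose m : R) := by
  rw [← Finset.Ico_add_one_right_eq_Icc, sum_Ico_eq_sum_range, mul_sum, Nat.sub_add_comm hj]
  refine sum_congr rfl fun m _ => ?_
  have h := Nat.choose_mul (n := n) (k := j + m) (s := j) (Nat.le_add_right j m)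
  rw [Nat.add_sub_cancel_left] at h ⊢
  rw [mul_assoc, ← Nat.cast_mul, h, Nat.cast_mul]
  ring

theorem coeff_of_shifted_truncated_binomial_general (n k : ℕ) (hn : k < n)
    (j : ℕ) (hj : j ≤ k) :
    ((P n k).comp (X - 1)).coeff j =
      ∑ i ∈ Finset.Icc j k, (-1 : ℚ) ^ (i - j) * (n.choose i : ℚ) * (i.choose j : ℚ) ∧
    ((P n k).comp (X - 1)).coeff j =
      (-1 : ℚ) ^ (k - j) * (n.choose j : ℚ) * ((n - j - 1).choose (k - j) : ℚ) := by
  refine ⟨coeff_P_comp_X_sub_one n k j, ?_⟩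
  rw [coeff_P_comp_X_sub_one, sum_Icc_alternating_choose_mul_choose n hj,
    alternating_sum_range_choose_eq_neg_one_pow_mul_choose (by omega)]
  ring

theorem coeff_of_shifted_truncated_binomial (n k : ℕ) (hk : 1 ≤ k) (hn : k < n)
    (j : ℕ) (hj : j ≤ k) :
    ((P n k).comp (X - 1)).coeff j =
      ∑ i ∈ Finset.Icc j k, (-1 : ℚ) ^ (i - j) * (n.choose i : ℚ) * (i.choose j : ℚ) ∧
    ((P n k).comp (X - 1)).coeff j =
      (-1 : ℚ) ^ (k - j) * (n.choose j : ℚ) * ((n - j - 1).choose (k - j) : ℚ) :=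
  coeff_of_shifted_truncated_binomial_general n k hn j hj
end

section
/- The polynomial 504000·x^5 + 393750·x^4 − 16200·x^3 − 15750·x^2 − 18900·x − 3150 in ℤ[x] is divisible by 7x^2 + 7x + 1. Consequently, there exist nonzero integers a_0, a_1, a_2, a_3, a_4, a_5, each of which has all of its prime factors ≤ 5 (namely (a_0,…,a_5) = (25, −27, 10, −9, −375, 2000)), such that the polynomial F_{10,5}(x) = ∑_{j=0}^{5} a_j c_j x^j is reducible over ℚ. -/
open Polynomial

theorem Polynomial.not_irreducible_of_eq_mul {R : Type*} [CommRing R] [IsDomain R]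
    {p q r : R[X]} (h : p = q * r) (hq : 0 < q.natDegree) (hr : 0 < r.natDegree) :
    ¬Irreducible p := fun hp =>
  (hp.isUnit_or_isUnit h).elim (not_isUnit_of_natDegree_pos q hq)
    (not_isUnit_of_natDegree_pos r hr)

theorem Nat.Prime.le_five_of_dvd {p i j k : ℕ} (hp : p.Prime) (h : p ∣ 2 ^ i * 3 ^ j * 5 ^ k) :
    p ≤ 5 := by
  rcases hp.dvd_mul.1 h with h | h5
  · rcases hp.dvd_mul.1 h with h2 | h3
    · exact (Nat.le_of_dvd two_pos (hp.dvd_of_dvd_pow h2)).trans (by norm_num)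
    · exact (Nat.le_of_dvd three_pos (hp.dvd_of_dvd_pow h3)).trans (by norm_num)
  · exact Nat.le_of_dvd (by norm_num) (hp.dvd_of_dvd_pow h5)

theorem Int.prime_le_five_of_dvd_of_dvd {p : ℕ} {m : ℤ} (hp : p.Prime) (hpm : (p : ℤ) ∣ m)
    (hm : m ∣ 2 ^ 4 * 3 ^ 3 * 5 ^ 3) : p ≤ 5 :=
  hp.le_five_of_dvd (Int.natCast_dvd_natCast.1 (hpm.trans hm))

theorem quintic_eq_mul :
    (C 504000 * X ^ 5 + C 393750 * X ^ 4 - C 16200 * X ^ 3 - C 15750 * X ^ 2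
        - C 18900 * X - C 3150 : ℤ[X]) =
      (C 7 * X ^ 2 + C 7 * X + C 1) *
        (C 72000 * X ^ 3 - C 15750 * X ^ 2 + C 3150 * X - C 3150) := by
  simp only [map_ofNat, C_1]
  ring

def smoothCoeffs : ℕ → ℤ
  | 0 => 25 | 1 => -27 | 2 => 10 | 3 => -9 | 4 => -375 | _ => 2000

theorem smoothCoeffs_smooth (j : ℕ) :
    smoothCoeffs j ≠ 0 ∧ ∀ p : ℕ, p.Prime → (p : ℤ) ∣ smoothCoeffs j → p ≤ 5 := by
  refine ⟨?_, fun p hp hpa => Int.prime_le_five_of_dvd_of_dvd hp hpa ?_⟩ <;>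
    rcases j with _ | _ | _ | _ | _ | _ <;> simp only [smoothCoeffs] <;> decide

theorem F_ten_five_smoothCoeffs :
    F 10 5 smoothCoeffs =
      (C 504000 * X ^ 5 + C 393750 * X ^ 4 - C 16200 * X ^ 3 - C 15750 * X ^ 2
        - C 18900 * X - C 3150 : ℤ[X]).map (Int.castRingHom ℚ) := by
  simp only [F, c, smoothCoeffs, Finset.sum_range_succ, Finset.sum_range_zero, Polynomial.map_sub,
    Polynomial.map_add, Polynomial.map_mul, Polynomial.map_pow, map_X, map_C]
  norm_num [Nat.choose]
  ring

theorem F_ten_five_reducible :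
    ((C 7 * X ^ 2 + C 7 * X + C 1 : Polynomial ℤ) ∣
      (C 504000 * X ^ 5 + C 393750 * X ^ 4 - C 16200 * X ^ 3 - C 15750 * X ^ 2
        - C 18900 * X - C 3150)) ∧
    ∃ a : ℕ → ℤ, (∀ j ≤ 5, a j ≠ 0 ∧ ∀ p : ℕ, p.Prime → (p : ℤ) ∣ a j → p ≤ 5) ∧
      a 0 = 25 ∧ a 1 = -27 ∧ a 2 = 10 ∧ a 3 = -9 ∧ a 4 = -375 ∧ a 5 = 2000 ∧
      ¬Irreducible (F 10 5 a) := by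
  refine ⟨quintic_eq_mul ▸ dvd_mul_right _ _,
    smoothCoeffs, fun j _ => smoothCoeffs_smooth j, rfl, rfl, rfl, rfl, rfl, rfl, ?_⟩
  rw [F_ten_five_smoothCoeffs, quintic_eq_mul, Polynomial.map_mul]
  have hquadratic : (C 7 * X ^ 2 + C 7 * X + C 1 : ℤ[X]).natDegree = 2 := by compute_degree!
  have hcubic :
      (C 72000 * X ^ 3 - C 15750 * X ^ 2 + C 3150 * X - C 3150 : ℤ[X]).natDegree = 3 := by
    compute_degree!
  have hmap := natDegree_map_eq_of_injective (RingHom.injective_int (Int.castRingHom ℚ))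
  refine not_irreducible_of_eq_mul rfl ?_ ?_ <;> simp only [hmap, hquadratic, hcubic] <;> norm_num
end
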